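/- arXiv:2308.10703 — 10 statements merged into one kernel-verified Lean document; each statement's English description precedes it below -/
import Mathlib

section
/- Let V be a real Hilbert space, let M ≥ 1 and α > 0, and let A : V → V be a continuous linear operator satisfying ‖A v‖ ≤ M‖v‖ and ⟨A v, v⟩ ≥ α‖v‖² for all v ∈ V. Then for all v, w ∈ V one has ‖w + A v‖² ≥ 2α⟨w, v⟩ + (1/3)(α/M)³ (‖w‖² + ‖v‖²). -/
/-!
Split `A v = α v + (A v - α v)`. Coercivity gives `‖A v - α v‖² ≤ ‖A v‖² - α²‖v‖²`, and
`‖w + A v‖² - 2α⟪w, v⟫ = ‖w‖² + 2⟪w, A v - α v⟫ + ‖A v‖²` is bounded below, via Cauchy–Schwarz,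
by a quadratic polynomial in `‖w‖`. Subtracting `c (‖w‖² + ‖v‖²)` keeps its discriminant
non-positive as long as `c (M² + 1) ≤ α²`, which holds for `c = (α/M)³/3` because `α ≤ M`.
-/

open scoped RealInnerProductSpace

lemma quadratic_nonneg_of_sq_le {p b K : ℝ} (hp : 0 < p) (hb : b ^ 2 ≤ p * K) (x : ℝ) :
    0 ≤ p * x ^ 2 - 2 * b * x + K := by
  have hscaled : p * (p * x ^ 2 - 2 * b * x + K) = (p * x - b) ^ 2 + (p * K - b ^ 2) := by ring
  have : 0 ≤ p * (p * x ^ 2 - 2 * b * x + K) := by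
    rw [hscaled]; nlinarith [sq_nonneg (p * x - b)]
  exact nonneg_of_mul_nonneg_right this hp

lemma third_div_cube_lt_one {M α : ℝ} (hα : 0 < α) (hαM : α ≤ M) :
    1 / 3 * (α / M) ^ 3 < 1 := by
  have hM0 : 0 ≤ M := hα.le.trans hαM
  have : (α / M) ^ 3 ≤ 1 := pow_le_one₀ (div_nonneg hα.le hM0) (div_le_one_of_le₀ hαM hM0)
  linarith

lemma third_div_cube_mul_sq_add_one_le_sq {M α : ℝ} (hM : 1 ≤ M) (hα : 0 < α) (hαM : α ≤ M) :
    1 / 3 * (α / M) ^ 3 * (M ^ 2 + 1) ≤ α ^ 2 := by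
  set t := α / M with ht
  have hM0 : 0 < M := one_pos.trans_le hM
  have hαt : α = t * M := by rw [ht, div_mul_cancel₀ _ hM0.ne']
  have ht0 : 0 < t := by positivity
  have ht1 : t ≤ 1 := div_le_one_of_le₀ hαM hM0.le
  -- after dividing by `t² / 3`, this is `t (M² + 1) ≤ 3 M²`
  rw [hαt]
  nlinarith [mul_pos (mul_pos ht0 ht0) hM0, mul_le_mul_of_nonneg_left ht1 (sq_nonneg t)]

section

variable {V : Type*} [NormedAddCommGroup V] [InnerProductSpace ℝ V]

lemma le_of_norm_le_of_mul_sq_le_inner {M α : ℝ} {u v : V} (hv : v ≠ 0)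
    (hu : ‖u‖ ≤ M * ‖v‖) (huv : α * ‖v‖ ^ 2 ≤ ⟪u, v⟫) : α ≤ M := by
  have hv0 : 0 < ‖v‖ := norm_pos_iff.mpr hv
  have : α * ‖v‖ ^ 2 ≤ M * ‖v‖ ^ 2 :=
    calc α * ‖v‖ ^ 2 ≤ ⟪u, v⟫ := huv
      _ ≤ ‖u‖ * ‖v‖ := real_inner_le_norm u v
      _ ≤ M * ‖v‖ * ‖v‖ := by gcongr
      _ = M * ‖v‖ ^ 2 := by ring
  exact le_of_mul_le_mul_right this (pow_pos hv0 2)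

lemma norm_sub_smul_sq_le {α : ℝ} {u v : V} (hα : 0 ≤ α) (huv : α * ‖v‖ ^ 2 ≤ ⟪u, v⟫) :
    ‖u - α • v‖ ^ 2 ≤ ‖u‖ ^ 2 - α ^ 2 * ‖v‖ ^ 2 := by
  rw [norm_sub_sq_real, real_inner_smul_right, norm_smul, Real.norm_of_nonneg hα]
  nlinarith [mul_le_mul_of_nonneg_left huv hα]

lemma mul_inner_add_mul_le_norm_add_sq {M α c : ℝ} {u v w : V} (hα : 0 ≤ α) (hc0 : 0 ≤ c)
    (hc1 : c < 1) (hc : c * (M ^ 2 + 1) ≤ α ^ 2) (hu : ‖u‖ ≤ M * ‖v‖)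
    (huv : α * ‖v‖ ^ 2 ≤ ⟪u, v⟫) :
    2 * α * ⟪w, v⟫ + c * (‖w‖ ^ 2 + ‖v‖ ^ 2) ≤ ‖w + u‖ ^ 2 := by
  set b := ‖u - α • v‖
  have hexpand : ‖w + u‖ ^ 2 = ‖w‖ ^ 2 + 2 * α * ⟪w, v⟫ + 2 * ⟪w, u - α • v⟫ + ‖u‖ ^ 2 := by
    rw [norm_add_sq_real, inner_sub_right, real_inner_smul_right]; ring
  have hcs : -(‖w‖ * b) ≤ ⟪w, u - α • v⟫ := (abs_le.mp (abs_real_inner_le_norm _ _)).1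
  have hu2 : ‖u‖ ^ 2 ≤ M ^ 2 * ‖v‖ ^ 2 := by
    rw [← mul_pow]; exact pow_le_pow_left₀ (norm_nonneg u) hu 2
  have hdiscr : b ^ 2 ≤ (1 - c) * (‖u‖ ^ 2 - c * ‖v‖ ^ 2) := by
    nlinarith [norm_sub_smul_sq_le hα huv, mul_le_mul_of_nonneg_left hu2 hc0,
      mul_le_mul_of_nonneg_right hc (sq_nonneg ‖v‖), sq_nonneg (c * ‖v‖)]
  have hquad := quadratic_nonneg_of_sq_le (sub_pos.mpr hc1) hdiscr ‖w‖
  linarith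

end

theorem stmt0_general {V : Type*} [NormedAddCommGroup V] [InnerProductSpace ℝ V]
    (M α : ℝ) (hM : 1 ≤ M) (hα : 0 < α) (A : V →L[ℝ] V)
    (hAM : ∀ v : V, ‖A v‖ ≤ M * ‖v‖) (hAα : ∀ v : V, α * ‖v‖ ^ 2 ≤ ⟪A v, v⟫)
    (v w : V) :
    2 * α * ⟪w, v⟫ + (1 / 3) * (α / M) ^ 3 * (‖w‖ ^ 2 + ‖v‖ ^ 2) ≤ ‖w + A v‖ ^ 2 := by
  rcases subsingleton_or_nontrivial V with hV | hV
  · simp [Subsingleton.elim v 0, Subsingleton.elim w 0]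
  obtain ⟨u, hu⟩ := exists_ne (0 : V)
  have hαM : α ≤ M := le_of_norm_le_of_mul_sq_le_inner hu (hAM u) (hAα u)
  exact mul_inner_add_mul_le_norm_add_sq hα.le (by positivity) (third_div_cube_lt_one hα hαM)
    (third_div_cube_mul_sq_add_one_le_sq hM hα hαM) (hAM v) (hAα v)

/-- Lemma 4.3: for an `M`-continuous, `α`-coercive operator `A` on a real Hilbert
space `V`, `‖w + A v‖² ≥ 2α⟨w,v⟩ + (1/3)(α/M)³(‖w‖² + ‖v‖²)`. -/
theorem stmt0 {V : Type*} [NormedAddCommGroup V] [InnerProductSpace ℝ V] [CompleteSpace V]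
    (M α : ℝ) (hM : 1 ≤ M) (hα : 0 < α) (A : V →L[ℝ] V)
    (hAM : ∀ v : V, ‖A v‖ ≤ M * ‖v‖) (hAα : ∀ v : V, α * ‖v‖ ^ 2 ≤ ⟪A v, v⟫)
    (v w : V) :
    2 * α * ⟪w, v⟫ + (1 / 3) * (α / M) ^ 3 * (‖w‖ ^ 2 + ‖v‖ ^ 2) ≤ ‖w + A v‖ ^ 2 :=
  stmt0_general M α hM hα A hAM hAα v w
end

section
/- Let L be a real Hilbert space and let Φ : L → L be a continuous linear operator with ‖Φ‖ ≤ 1. Let a > 0 and b ∈ [0, a] be real numbers such that γ := a − b‖Φ‖² > 0. Then for all v, w ∈ L one has a‖w‖² − b‖v‖² + (9a²/γ)‖v − Φ w‖² ≥ (γ/3)(‖w‖² + ‖v‖²). -/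
/-! Put `N = ‖Φ‖`, `γ = a - b N²` and `d = ‖v - Φ w‖`, so that `‖v‖ ≤ N ‖w‖ + d`. The claim
amounts to `(b + γ/3) ‖v‖² ≤ (a - γ/3) ‖w‖² + (9a²/γ) d²`. Bounding `‖v‖²` by Young's
inequality `(x + y)² ≤ (1 + ε) x² + (1 + ε⁻¹) y²` with `ε = γ / (4a)`, the coefficient of `‖w‖²`
fits because `N ≤ 1` and that of `d²` because `b + γ/3 ≤ 4a/3`. -/

theorem add_sq_le_one_add_mul_sq {ε : ℝ} (hε : 0 < ε) (x y : ℝ) :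
    (x + y) ^ 2 ≤ (1 + ε) * x ^ 2 + (1 + ε⁻¹) * y ^ 2 := by
  linarith [two_mul_le_add_mul_sq (a := x) (b := y) hε, add_sq x y]

theorem coercivity_of_le_mul_add {a b N W V d : ℝ} (ha : 0 < a) (hb0 : 0 ≤ b) (hba : b ≤ a)
    (hN0 : 0 ≤ N) (hN1 : N ≤ 1) (hγ : 0 < a - b * N ^ 2) (hV0 : 0 ≤ V) (hV : V ≤ N * W + d) :
    (a - b * N ^ 2) / 3 * (W ^ 2 + V ^ 2) ≤
      a * W ^ 2 - b * V ^ 2 + 9 * a ^ 2 / (a - b * N ^ 2) * d ^ 2 := by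
  set γ := a - b * N ^ 2 with hγ_def
  set ε := γ / (4 * a) with hε_def
  set c := b + γ / 3 with hc_def
  have hN2 : N ^ 2 ≤ 1 := pow_le_one₀ hN0 hN1
  have hε : 0 < ε := by positivity
  have hc0 : 0 ≤ c := by positivity
  have hγa : γ ≤ a := sub_le_self a (by positivity)
  have hc : c ≤ 4 * a / 3 := by linarith
  have hcε : c * ε ≤ γ / 3 := calc
    c * ε ≤ 4 * a / 3 * ε := by gcongr
    _ = γ / 3 := by rw [hε_def]; field_simp
  have hV2 : V ^ 2 ≤ (1 + ε) * N ^ 2 * W ^ 2 + (1 + ε⁻¹) * d ^ 2 := calc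
    V ^ 2 ≤ (N * W + d) ^ 2 := pow_le_pow_left₀ hV0 hV 2
    _ ≤ _ := by simpa only [mul_pow, mul_assoc] using add_sq_le_one_add_mul_sq hε (N * W) d
  have hW_coeff : c * ((1 + ε) * N ^ 2) ≤ a - γ / 3 := by
    have hcN : c * N ^ 2 = a - γ + γ * N ^ 2 / 3 := by rw [hc_def, hγ_def]; ring
    nlinarith [mul_le_mul_of_nonneg_left hN2 (mul_nonneg hc0 hε.le),
      mul_le_mul_of_nonneg_left hN2 hγ.le]
  have hd_coeff : c * (1 + ε⁻¹) ≤ 9 * a ^ 2 / γ := by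
    have hmul : c * (1 + ε⁻¹) * γ = c * (γ + 4 * a) := by rw [hε_def, inv_div]; field_simp
    rw [le_div_iff₀ hγ, hmul]
    nlinarith [mul_le_mul hc (show γ + 4 * a ≤ 5 * a by linarith) (by positivity) (by positivity)]
  calc γ / 3 * (W ^ 2 + V ^ 2) = a * W ^ 2 - b * V ^ 2 + (c * V ^ 2 - (a - γ / 3) * W ^ 2) := by
        ring
    _ ≤ a * W ^ 2 - b * V ^ 2 + 9 * a ^ 2 / γ * d ^ 2 := by
        nlinarith [mul_le_mul_of_nonneg_left hV2 hc0,
          mul_le_mul_of_nonneg_right hW_coeff (sq_nonneg W),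
          mul_le_mul_of_nonneg_right hd_coeff (sq_nonneg d)]

theorem stmt1_general {L : Type*} [NormedAddCommGroup L] [InnerProductSpace ℝ L]
    (Φ : L →L[ℝ] L) (hΦ : ‖Φ‖ ≤ 1) (a b : ℝ) (ha : 0 < a) (hb0 : 0 ≤ b) (hba : b ≤ a)
    (hγ : 0 < a - b * ‖Φ‖ ^ 2) (v w : L) :
    (a - b * ‖Φ‖ ^ 2) / 3 * (‖w‖ ^ 2 + ‖v‖ ^ 2) ≤
      a * ‖w‖ ^ 2 - b * ‖v‖ ^ 2 + 9 * a ^ 2 / (a - b * ‖Φ‖ ^ 2) * ‖v - Φ w‖ ^ 2 := by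
  have hv : ‖v‖ ≤ ‖Φ‖ * ‖w‖ + ‖v - Φ w‖ := calc
    ‖v‖ ≤ ‖Φ w‖ + ‖v - Φ w‖ := norm_le_insert' v (Φ w)
    _ ≤ ‖Φ‖ * ‖w‖ + ‖v - Φ w‖ := by gcongr; exact Φ.le_opNorm w
  exact coercivity_of_le_mul_add ha hb0 hba (norm_nonneg Φ) hΦ hγ (norm_nonneg v) hv

/-- Lemma 4.4: for a linear contraction `Φ` on a real Hilbert space `L`, reals
`a > 0`, `b ∈ [0,a]` with `γ := a - b‖Φ‖² > 0`, one has
`a‖w‖² - b‖v‖² + (9a²/γ)‖v - Φw‖² ≥ (γ/3)(‖w‖² + ‖v‖²)`. -/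
theorem stmt1 {L : Type*} [NormedAddCommGroup L] [InnerProductSpace ℝ L] [CompleteSpace L]
    (Φ : L →L[ℝ] L) (hΦ : ‖Φ‖ ≤ 1) (a b : ℝ) (ha : 0 < a) (hb0 : 0 ≤ b) (hba : b ≤ a)
    (hγ : 0 < a - b * ‖Φ‖ ^ 2) (v w : L) :
    (a - b * ‖Φ‖ ^ 2) / 3 * (‖w‖ ^ 2 + ‖v‖ ^ 2) ≤
      a * ‖w‖ ^ 2 - b * ‖v‖ ^ 2 + 9 * a ^ 2 / (a - b * ‖Φ‖ ^ 2) * ‖v - Φ w‖ ^ 2 :=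
  stmt1_general Φ hΦ a b ha hb0 hba hγ v w
end

section
/- For every choice of real numbers M ≥ 1, α > 0, ζ > 0 and δ > 0 there exists β̂ > 0, depending only on α, M, ζ and δ, with the following property. Let V and L be real Hilbert spaces, let A : V → V be a continuous linear operator with ‖A v‖ ≤ M‖v‖ and ⟨A v, v⟩ ≥ α‖v‖² for all v ∈ V, and let Φ : L → L be a continuous linear operator with ‖Φ‖ ≤ 1. Let X̂ be a linear subspace of Ẑ := V × V × L × L, and for i = 1,…,4 let X̂ᵢ be the closure (in the corresponding factor) of the set of i-th components of elements of X̂. Assume that X̂₁ ⊆ X̂₂, and that there exist μ ∈ (0, ζ] and ν ∈ [0, μ] with μ − ν‖Φ‖² ≥ δ such that for all x = (x₁, x₂, x₃, x₄) ∈ X̂ one has ⟨x₁, x₂⟩_V + (α²/(12 M³))(‖x₂‖² + ‖x₁‖²) ≥ μ‖x₄‖² − ν‖x₃‖². Then for all x = (x₁, x₂, x₃, x₄) ∈ X̂, sup{ ⟨x₁ + A x₂, y₁⟩_V + ⟨x₃ − Φ x₄, y₂⟩_L : (y₁, y₂) ∈ X̂₂ × X̂₃ with ‖y₁‖² + ‖y₂‖²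 = 1 } ≥ β̂ (‖x₁‖² + ‖x₂‖² + ‖x₃‖² + ‖x₄‖²)^{1/2}. -/
open scoped RealInnerProductSpace

/-!
Test `x ∈ X̂` against `y = (12M³ x₂ + 12αM x₁, 6M³(4ν + δ) x₃)`, which lies in `X̂₂ × X̂₃` because
`X̂₁ ⊆ X̂₂`. The hypothesis on `X̂` controls `⟨x₁, x₂⟩`, coercivity and boundedness of `A` together
with Young's inequality control `⟨A x₂, y₁⟩`, and `‖Φ‖ ≤ 1` controls `⟨Φ x₄, x₃⟩`; altogether
`b̂(x, y) ≥ min(5α, 3δ) ‖x‖²`. Since `‖y‖ ≤ (12M³ + 12αM + 30M³ζ) ‖x‖`, testing with `y / ‖y‖` gives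
`β̂ = min(5α, 3δ) / (12M³ + 12αM + 30M³ζ)`.
-/

lemma closure_image_eq_coe_topologicalClosure_map {E F : Type*} [AddCommGroup E] [Module ℝ E]
    [AddCommGroup F] [Module ℝ F] [TopologicalSpace F] [IsTopologicalAddGroup F]
    [ContinuousSMul ℝ F] (X : Submodule ℝ E) (f : E →ₗ[ℝ] F) :
    closure (f '' X) = ((X.map f).topologicalClosure : Set F) := by
  rw [Submodule.topologicalClosure_coe, Submodule.map_coe]

section UnitSphereValues

variable {E F : Type*} [NormedAddCommGroup E] [InnerProductSpace ℝ E]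
  [NormedAddCommGroup F] [InnerProductSpace ℝ F]

def unitSphereValues (K₁ : Submodule ℝ E) (K₂ : Submodule ℝ F) (u : E) (w : F) : Set ℝ :=
  {r | ∃ y₁ ∈ K₁, ∃ y₂ ∈ K₂, ‖y₁‖ ^ 2 + ‖y₂‖ ^ 2 = 1 ∧ r = ⟪u, y₁⟫ + ⟪w, y₂⟫}

variable {K₁ : Submodule ℝ E} {K₂ : Submodule ℝ F} {u : E} {w : F}

lemma bddAbove_unitSphereValues : BddAbove (unitSphereValues K₁ K₂ u w) := by
  refine ⟨‖u‖ + ‖w‖, ?_⟩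
  rintro r ⟨y₁, -, y₂, -, hy, rfl⟩
  have h₁ : ‖y₁‖ ≤ 1 := by nlinarith [norm_nonneg y₁, sq_nonneg ‖y₂‖]
  have h₂ : ‖y₂‖ ≤ 1 := by nlinarith [norm_nonneg y₂, sq_nonneg ‖y₁‖]
  calc ⟪u, y₁⟫ + ⟪w, y₂⟫ ≤ ‖u‖ * ‖y₁‖ + ‖w‖ * ‖y₂‖ :=
        add_le_add (real_inner_le_norm _ _) (real_inner_le_norm _ _)
    _ ≤ ‖u‖ + ‖w‖ :=
        add_le_add (mul_le_of_le_one_right (norm_nonneg u) h₁)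
          (mul_le_of_le_one_right (norm_nonneg w) h₂)

/-- The set is symmetric under `(y₁, y₂) ↦ (-y₁, -y₂)`, and `sSup ∅ = 0`. -/
lemma sSup_unitSphereValues_nonneg : 0 ≤ sSup (unitSphereValues K₁ K₂ u w) := by
  rcases (unitSphereValues K₁ K₂ u w).eq_empty_or_nonempty with h | ⟨_, y₁, hy₁, y₂, hy₂, hy, rfl⟩
  · rw [h, Real.sSup_empty]
  have hneg : -(⟪u, y₁⟫ + ⟪w, y₂⟫) ∈ unitSphereValues K₁ K₂ u w :=
    ⟨-y₁, K₁.neg_mem hy₁, -y₂, K₂.neg_mem hy₂, by simpa only [norm_neg] using hy, by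
      simp only [inner_neg_right, neg_add]⟩
  have h₁ := le_csSup bddAbove_unitSphereValues hneg
  have h₂ : ⟪u, y₁⟫ + ⟪w, y₂⟫ ≤ sSup (unitSphereValues K₁ K₂ u w) :=
    le_csSup bddAbove_unitSphereValues ⟨y₁, hy₁, y₂, hy₂, hy, rfl⟩
  linarith

lemma div_sqrt_le_sSup_unitSphereValues {y₁ : E} {y₂ : F} (hy₁ : y₁ ∈ K₁) (hy₂ : y₂ ∈ K₂)
    (hy : 0 < ‖y₁‖ ^ 2 + ‖y₂‖ ^ 2) :
    (⟪u, y₁⟫ + ⟪w, y₂⟫) / √(‖y₁‖ ^ 2 + ‖y₂‖ ^ 2) ≤ sSup (unitSphereValues K₁ K₂ u w) := by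
  set n := √(‖y₁‖ ^ 2 + ‖y₂‖ ^ 2)
  have hn : 0 < n := Real.sqrt_pos.2 hy
  refine le_csSup bddAbove_unitSphereValues
    ⟨n⁻¹ • y₁, K₁.smul_mem _ hy₁, n⁻¹ • y₂, K₂.smul_mem _ hy₂, ?_, ?_⟩
  · rw [norm_smul, norm_smul, mul_pow, mul_pow, ← mul_add, Real.norm_eq_abs, sq_abs, inv_pow,
      Real.sq_sqrt hy.le, inv_mul_cancel₀ hy.ne']
  · rw [real_inner_smul_right, real_inner_smul_right, div_eq_inv_mul, mul_add]

lemma le_sSup_unitSphereValues {κ C T : ℝ} (hκ : 0 < κ) (hC : 0 < C) {y₁ : E} {y₂ : F}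
    (hy₁ : y₁ ∈ K₁) (hy₂ : y₂ ∈ K₂) (hnorm : ‖y₁‖ + ‖y₂‖ ≤ C * √T)
    (hval : κ * T ≤ ⟪u, y₁⟫ + ⟪w, y₂⟫) :
    κ / C * √T ≤ sSup (unitSphereValues K₁ K₂ u w) := by
  rcases le_or_gt T 0 with hT | hT
  · rw [Real.sqrt_eq_zero'.2 hT, mul_zero]
    exact sSup_unitSphereValues_nonneg
  have hy : 0 < ‖y₁‖ ^ 2 + ‖y₂‖ ^ 2 := by
    by_contra! h
    have h₁ : ‖y₁‖ = 0 := by nlinarith [norm_nonneg y₁, sq_nonneg ‖y₂‖]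
    have h₂ : ‖y₂‖ = 0 := by nlinarith [norm_nonneg y₂, sq_nonneg ‖y₁‖]
    rw [norm_eq_zero] at h₁ h₂
    subst h₁ h₂
    simp only [inner_zero_right, add_zero] at hval
    nlinarith
  have hn : √(‖y₁‖ ^ 2 + ‖y₂‖ ^ 2) ≤ C * √T := by
    refine le_trans (Real.sqrt_le_iff.2 ⟨by positivity, ?_⟩) hnorm
    nlinarith [mul_nonneg (norm_nonneg y₁) (norm_nonneg y₂)]
  refine le_trans ?_ (div_sqrt_le_sSup_unitSphereValues hy₁ hy₂ hy)
  rw [le_div_iff₀ (Real.sqrt_pos.2 hy)]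
  calc κ / C * √T * √(‖y₁‖ ^ 2 + ‖y₂‖ ^ 2) ≤ κ / C * √T * (C * √T) := by gcongr
    _ = κ * T := by field_simp; rw [Real.sq_sqrt hT.le]
    _ ≤ _ := hval

end UnitSphereValues

section TestPair

variable {V L : Type*} [NormedAddCommGroup V] [InnerProductSpace ℝ V]
  [NormedAddCommGroup L] [InnerProductSpace ℝ L]

lemma norm_sq_sub_opNorm_sq_mul_le_two_inner (Φ : L →L[ℝ] L) (p q : L) :
    ‖p‖ ^ 2 - ‖Φ‖ ^ 2 * ‖q‖ ^ 2 ≤ 2 * ⟪p - Φ q, p⟫ := by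
  have h : ⟪Φ q, p⟫ ≤ ‖Φ‖ * ‖q‖ * ‖p‖ :=
    (real_inner_le_norm _ _).trans (mul_le_mul_of_nonneg_right (Φ.le_opNorm q) (norm_nonneg p))
  rw [inner_sub_left, real_inner_self_eq_norm_sq]
  nlinarith [sq_nonneg (‖Φ‖ * ‖q‖ - ‖p‖)]

variable {A : V →L[ℝ] V} {M α : ℝ}

lemma mul_norm_sq_le_of_coercive (hA_bdd : ∀ v, ‖A v‖ ≤ M * ‖v‖)
    (hA_coer : ∀ v, α * ‖v‖ ^ 2 ≤ ⟪A v, v⟫) (v : V) : α * ‖v‖ ^ 2 ≤ M * ‖v‖ ^ 2 :=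
  calc α * ‖v‖ ^ 2 ≤ ⟪A v, v⟫ := hA_coer v
    _ ≤ ‖A v‖ * ‖v‖ := real_inner_le_norm _ _
    _ ≤ M * ‖v‖ * ‖v‖ := mul_le_mul_of_nonneg_right (hA_bdd v) (norm_nonneg v)
    _ = M * ‖v‖ ^ 2 := by ring

lemma inner_apply_smul_add_smul_ge (hM : 0 ≤ M) (hα : 0 ≤ α) (hA_bdd : ∀ v, ‖A v‖ ≤ M * ‖v‖)
    (hA_coer : ∀ v, α * ‖v‖ ^ 2 ≤ ⟪A v, v⟫) (a b : V) :
    6 * α * M * (M ^ 2 * ‖b‖ ^ 2 - ‖a‖ ^ 2) ≤ ⟪A b, (12 * M ^ 3) • b + (12 * α * M) • a⟫ := by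
  have hba : -(M * ‖b‖ * ‖a‖) ≤ ⟪A b, a⟫ :=
    calc -(M * ‖b‖ * ‖a‖) ≤ -(‖A b‖ * ‖a‖) :=
          neg_le_neg (mul_le_mul_of_nonneg_right (hA_bdd b) (norm_nonneg a))
      _ ≤ ⟪A b, a⟫ := neg_le_of_abs_le (abs_real_inner_le_norm _ _)
  rw [inner_add_right, real_inner_smul_right, real_inner_smul_right]
  linear_combination 12 * M ^ 3 * hA_coer b + 12 * α * M * hba
    + 6 * α * M * sq_nonneg (M * ‖b‖ - ‖a‖)

lemma min_mul_le_inner_testPair (Φ : L →L[ℝ] L) {μ ν δ : ℝ} (hM : 1 ≤ M) (hα : 0 ≤ α)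
    (hA_bdd : ∀ v, ‖A v‖ ≤ M * ‖v‖) (hA_coer : ∀ v, α * ‖v‖ ^ 2 ≤ ⟪A v, v⟫) (hΦ : ‖Φ‖ ≤ 1)
    (hν : 0 ≤ ν) (hδ : 0 ≤ δ) (hδμ : δ ≤ μ - ν * ‖Φ‖ ^ 2) {x₁ x₂ : V} {x₃ x₄ : L}
    (hx : μ * ‖x₄‖ ^ 2 - ν * ‖x₃‖ ^ 2 ≤
      ⟪x₁, x₂⟫ + α ^ 2 / (12 * M ^ 3) * (‖x₂‖ ^ 2 + ‖x₁‖ ^ 2)) :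
    min (5 * α) (3 * δ) * (‖x₁‖ ^ 2 + ‖x₂‖ ^ 2 + ‖x₃‖ ^ 2 + ‖x₄‖ ^ 2) ≤
      ⟪x₁ + A x₂, (12 * M ^ 3) • x₂ + (12 * α * M) • x₁⟫
        + ⟪x₃ - Φ x₄, (6 * M ^ 3 * (4 * ν + δ)) • x₃⟫ := by
  have hM0 : 0 ≤ M := zero_le_one.trans hM
  have hM3 : 1 ≤ M ^ 3 := one_le_pow₀ hM
  have hMM3 : M ≤ M ^ 3 := le_self_pow₀ hM (by norm_num)
  have hΦ2 : ‖Φ‖ ^ 2 ≤ 1 := pow_le_one₀ (norm_nonneg Φ) hΦ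
  have hx' : 12 * M ^ 3 * (μ * ‖x₄‖ ^ 2 - ν * ‖x₃‖ ^ 2) - α ^ 2 * (‖x₂‖ ^ 2 + ‖x₁‖ ^ 2) ≤
      12 * M ^ 3 * ⟪x₁, x₂⟫ := by
    have h := mul_le_mul_of_nonneg_left hx (by positivity : (0 : ℝ) ≤ 12 * M ^ 3)
    have hc : 12 * M ^ 3 * (α ^ 2 / (12 * M ^ 3)) = α ^ 2 := by field_simp
    linear_combination h + (‖x₂‖ ^ 2 + ‖x₁‖ ^ 2) * hc
  have hV := inner_apply_smul_add_smul_ge hM0 hα hA_bdd hA_coer x₁ x₂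
  have hL := norm_sq_sub_opNorm_sq_mul_le_two_inner Φ x₃ x₄
  have h₁ := mul_norm_sq_le_of_coercive hA_bdd hA_coer x₁
  have h₂ := mul_norm_sq_le_of_coercive hA_bdd hA_coer x₂
  have hsum : 5 * α * ‖x₁‖ ^ 2 + 5 * α * ‖x₂‖ ^ 2 + 3 * δ * ‖x₃‖ ^ 2 + 9 * δ * ‖x₄‖ ^ 2 ≤
      ⟪x₁ + A x₂, (12 * M ^ 3) • x₂ + (12 * α * M) • x₁⟫
        + ⟪x₃ - Φ x₄, (6 * M ^ 3 * (4 * ν + δ)) • x₃⟫ := by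
    rw [inner_add_left, inner_add_right, real_inner_smul_right, real_inner_smul_right,
      real_inner_smul_right, real_inner_self_eq_norm_sq]
    linear_combination hx' + hV + 3 * M ^ 3 * (4 * ν + δ) * hL + α * h₁ + α * h₂
      + α * ‖x₂‖ ^ 2 * hMM3 + 12 * M ^ 3 * ‖x₄‖ ^ 2 * hδμ + 3 * M ^ 3 * δ * ‖x₄‖ ^ 2 * hΦ2
      + 5 * α * ‖x₁‖ ^ 2 * hM + 5 * α * ‖x₂‖ ^ 2 * hM3 + 3 * δ * ‖x₃‖ ^ 2 * hM3
      + 9 * δ * ‖x₄‖ ^ 2 * hM3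
  linear_combination hsum + (‖x₁‖ ^ 2 + ‖x₂‖ ^ 2) * min_le_left (5 * α) (3 * δ)
    + (‖x₃‖ ^ 2 + ‖x₄‖ ^ 2) * min_le_right (5 * α) (3 * δ) + 6 * ‖x₄‖ ^ 2 * hδ

lemma norm_testPair_le (hM : 0 ≤ M) (hα : 0 ≤ α) {ν δ ζ : ℝ} (hν : 0 ≤ ν) (hνζ : ν ≤ ζ)
    (hδ : 0 ≤ δ) (hδζ : δ ≤ ζ) (x₁ x₂ : V) (x₃ x₄ : L) :
    ‖(12 * M ^ 3) • x₂ + (12 * α * M) • x₁‖ + ‖(6 * M ^ 3 * (4 * ν + δ)) • x₃‖ ≤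
      (12 * M ^ 3 + 12 * α * M + 30 * M ^ 3 * ζ) *
        √(‖x₁‖ ^ 2 + ‖x₂‖ ^ 2 + ‖x₃‖ ^ 2 + ‖x₄‖ ^ 2) := by
  set s := √(‖x₁‖ ^ 2 + ‖x₂‖ ^ 2 + ‖x₃‖ ^ 2 + ‖x₄‖ ^ 2)
  have h₁ : ‖x₁‖ ≤ s :=
    Real.le_sqrt_of_sq_le (by nlinarith [sq_nonneg ‖x₂‖, sq_nonneg ‖x₃‖, sq_nonneg ‖x₄‖])
  have h₂ : ‖x₂‖ ≤ s :=
    Real.le_sqrt_of_sq_le (by nlinarith [sq_nonneg ‖x₁‖, sq_nonneg ‖x₃‖, sq_nonneg ‖x₄‖])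
  have h₃ : ‖x₃‖ ≤ s :=
    Real.le_sqrt_of_sq_le (by nlinarith [sq_nonneg ‖x₁‖, sq_nonneg ‖x₂‖, sq_nonneg ‖x₄‖])
  calc ‖(12 * M ^ 3) • x₂ + (12 * α * M) • x₁‖ + ‖(6 * M ^ 3 * (4 * ν + δ)) • x₃‖
      ≤ 12 * M ^ 3 * ‖x₂‖ + 12 * α * M * ‖x₁‖ + 6 * M ^ 3 * (4 * ν + δ) * ‖x₃‖ := by
        grw [norm_add_le, norm_smul, norm_smul, norm_smul, Real.norm_of_nonneg (by positivity),
          Real.norm_of_nonneg (by positivity), Real.norm_of_nonneg (by positivity)]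
    _ ≤ _ := by
        linear_combination 12 * M ^ 3 * h₂ + 12 * α * M * h₁ + 6 * M ^ 3 * (4 * ν + δ) * h₃
          + 24 * M ^ 3 * s * hνζ + 6 * M ^ 3 * s * hδζ

end TestPair

/-- Lemma 4.5: the sufficient condition for the discrete inf-sup inequality. -/
theorem stmt3 (M α ζ δ : ℝ) (hM : 1 ≤ M) (hα : 0 < α) (hζ : 0 < ζ) (hδ : 0 < δ) :
    ∃ β : ℝ, 0 < β ∧
      ∀ (V : Type) (_ : NormedAddCommGroup V) (_ : InnerProductSpace ℝ V) (_ : CompleteSpace V)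
        (L : Type) (_ : NormedAddCommGroup L) (_ : InnerProductSpace ℝ L) (_ : CompleteSpace L)
        (A : V →L[ℝ] V), (∀ v : V, ‖A v‖ ≤ M * ‖v‖) → (∀ v : V, α * ‖v‖ ^ 2 ≤ ⟪A v, v⟫) →
      ∀ (Φ : L →L[ℝ] L), ‖Φ‖ ≤ 1 →
      ∀ (Xh : Submodule ℝ (V × V × L × L)),
      closure ((fun z : V × V × L × L => z.1) '' (Xh : Set (V × V × L × L))) ⊆
        closure ((fun z : V × V × L × L => z.2.1) '' (Xh : Set (V × V × L × L))) →
      ∀ μ ν : ℝ, 0 < μ → μ ≤ ζ → 0 ≤ ν → ν ≤ μ → δ ≤ μ - ν * ‖Φ‖ ^ 2 →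
      (∀ x ∈ Xh, μ * ‖x.2.2.2‖ ^ 2 - ν * ‖x.2.2.1‖ ^ 2 ≤
        ⟪x.1, x.2.1⟫ + α ^ 2 / (12 * M ^ 3) * (‖x.2.1‖ ^ 2 + ‖x.1‖ ^ 2)) →
      ∀ x ∈ Xh,
        β * Real.sqrt (‖x.1‖ ^ 2 + ‖x.2.1‖ ^ 2 + ‖x.2.2.1‖ ^ 2 + ‖x.2.2.2‖ ^ 2) ≤
        sSup { r : ℝ |
          ∃ y₁ ∈ closure ((fun z : V × V × L × L => z.2.1) '' (Xh : Set (V × V × L × L))),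
          ∃ y₂ ∈ closure ((fun z : V × V × L × L => z.2.2.1) '' (Xh : Set (V × V × L × L))),
          ‖y₁‖ ^ 2 + ‖y₂‖ ^ 2 = 1 ∧
            r = ⟪x.1 + A x.2.1, y₁⟫ + ⟪x.2.2.1 - Φ x.2.2.2, y₂⟫ } := by
  refine ⟨min (5 * α) (3 * δ) / (12 * M ^ 3 + 12 * α * M + 30 * M ^ 3 * ζ), by positivity, ?_⟩
  intro V _ _ _ L _ _ _ A hA_bdd hA_coer Φ hΦ Xh hX₁₂ μ ν _ hμζ hν hνμ hδμ hX x hx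
  have hM0 : 0 ≤ M := zero_le_one.trans hM
  have hδζ : δ ≤ ζ := by nlinarith [mul_nonneg hν (sq_nonneg ‖Φ‖)]
  obtain ⟨K₂, hK₂⟩ : ∃ K : Submodule ℝ V,
      closure ((fun z : V × V × L × L => z.2.1) '' (Xh : Set (V × V × L × L))) = K :=
    ⟨_, closure_image_eq_coe_topologicalClosure_map Xh
      (LinearMap.fst ℝ V (L × L) ∘ₗ LinearMap.snd ℝ V (V × L × L))⟩
  obtain ⟨K₃, hK₃⟩ : ∃ K : Submodule ℝ L,
      closure ((fun z : V × V × L × L => z.2.2.1) '' (Xh : Set (V × V × L × L))) = K :=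
    ⟨_, closure_image_eq_coe_topologicalClosure_map Xh
      (LinearMap.fst ℝ L L ∘ₗ LinearMap.snd ℝ V (L × L) ∘ₗ LinearMap.snd ℝ V (V × L × L))⟩
  rw [hK₂] at hX₁₂
  rw [hK₂, hK₃]
  have hx₁ : x.1 ∈ K₂ := hX₁₂ (subset_closure ⟨x, hx, rfl⟩)
  have hx₂ : x.2.1 ∈ (K₂ : Set V) := hK₂ ▸ subset_closure ⟨x, hx, rfl⟩
  have hx₃ : x.2.2.1 ∈ (K₃ : Set L) := hK₃ ▸ subset_closure ⟨x, hx, rfl⟩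
  exact le_sSup_unitSphereValues (lt_min (by positivity) (by positivity)) (by positivity)
    (add_mem (K₂.smul_mem _ hx₂) (K₂.smul_mem _ hx₁)) (K₃.smul_mem _ hx₃)
    (norm_testPair_le hM0 hα.le hν (hνμ.trans hμζ) hδ.le hδζ x.1 x.2.1 x.2.2.1 x.2.2.2)
    (min_mul_le_inner_testPair Φ hM hα.le hA_bdd hA_coer hΦ hν hδ.le hδμ (hX x hx))
end

section
/- Let X be a finite-dimensional real vector space, L and V real Hilbert spaces, P : X → L and G : X → V linear maps, and S : V → V a continuous self-adjoint linear operator with ⟨S ξ, ξ⟩ ≥ 0 for all ξ ∈ V. Let R : X → X be a linear map satisfying ⟨S G(R u), G v⟩_V = ⟨P u, P v⟩_L for all u, v ∈ X. Let N ≥ 1 be an integer, T > 0, k = T/N, and let w⁰, w¹, …, w^N ∈ X; set δʲ := (wʲ − w^{j−1})/k for j = 1,…,N. Then for every m ∈ {0,…,N}: ‖P w^m‖_L ≤ (Σ_{j=1}^N k ⟨S G(R δʲ), G(R δʲ)⟩)^{1/2} + (Σ_{j=1}^N k ⟨S G wʲ, G wʲ⟩)^{1/2} + ‖P w⁰‖_L.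 -/
/-! Since `‖a‖² - ‖b‖² ≤ 2⟪a - b, a⟫`, the defining relation of `R` bounds each increment
`‖P w^j‖² - ‖P w^(j-1)‖²` by `2k⟪S G(R δʲ), G wʲ⟫`, and Cauchy–Schwarz for the form of `S` bounds
this by `2√(k aⱼ)√(k bⱼ)` with `aⱼ, bⱼ` the two quadratic terms. Telescoping and the discrete
Cauchy–Schwarz inequality give `‖P wᵐ‖² ≤ ‖P w⁰‖² + 2AB ≤ (A + B + ‖P w⁰‖)²`, where `A`, `B`
are the two square roots in the claim. -/

open scoped RealInnerProductSpace

open Finset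

theorem LinearMap.IsPositive.real_inner_map_le_sqrt_mul_sqrt {E : Type*} [NormedAddCommGroup E]
    [InnerProductSpace ℝ E] {T : E →ₗ[ℝ] E} (hT : T.IsPositive) (x y : E) :
    ⟪T x, y⟫ ≤ √⟪T x, x⟫ * √⟪T y, y⟫ := by
  let B : LinearMap.BilinForm ℝ E := innerₗ E ∘ₗ T
  have hB : LinearMap.IsSymm B := ⟨fun x y => by
    simp only [B, LinearMap.comp_apply, innerₗ_apply_apply, RingHom.id_apply]
    rw [hT.isSymmetric, real_inner_comm]⟩
  have hsq : ⟪T x, y⟫ ^ 2 ≤ ⟪T x, x⟫ * ⟪T y, y⟫ :=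
    B.apply_sq_le_of_symm (hT.inner_nonneg_left ·) hB x y
  calc ⟪T x, y⟫ ≤ |⟪T x, y⟫| := le_abs_self _
    _ ≤ √(⟪T x, x⟫ * ⟪T y, y⟫) := Real.abs_le_sqrt hsq
    _ = √⟪T x, x⟫ * √⟪T y, y⟫ := Real.sqrt_mul (hT.inner_nonneg_left x) _

theorem sq_norm_sub_sq_norm_le_two_mul_inner {E : Type*} [NormedAddCommGroup E]
    [InnerProductSpace ℝ E] (x y : E) :
    ‖x‖ ^ 2 - ‖y‖ ^ 2 ≤ 2 * ⟪x - y, x⟫ := by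
  have hsub := norm_sub_sq_real x y
  rw [inner_sub_left, real_inner_self_eq_norm_sq, real_inner_comm]
  nlinarith [sq_nonneg ‖x - y‖]

theorem le_add_sum_Icc_of_sub_le {f g : ℕ → ℝ} {N : ℕ} (hg : ∀ j, 0 ≤ g j)
    (hfg : ∀ j ∈ Icc 1 N, f j - f (j - 1) ≤ g j) {m : ℕ} (hm : m ≤ N) :
    f m ≤ f 0 + ∑ j ∈ Icc 1 N, g j := by
  have htel : f m ≤ f 0 + ∑ j ∈ Icc 1 m, g j := by
    induction m with
    | zero => simp
    | succ n ih =>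
      have hstep := hfg (n + 1) (mem_Icc.mpr ⟨by omega, hm⟩)
      rw [sum_Icc_succ_top (by omega)]
      simp only [Nat.add_sub_cancel] at hstep
      linarith [ih (by omega)]
  have hsub : ∑ j ∈ Icc 1 m, g j ≤ ∑ j ∈ Icc 1 N, g j :=
    sum_le_sum_of_subset_of_nonneg (Icc_subset_Icc_right hm) fun j _ _ => hg j
  linarith

theorem norm_le_sqrt_add_sqrt_add_norm_of_inner_sub_le {E : Type*} [NormedAddCommGroup E]
    [InnerProductSpace ℝ E] (x : ℕ → E) {α β : ℕ → ℝ} (hα : ∀ j, 0 ≤ α j) (hβ : ∀ j, 0 ≤ β j)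
    {N : ℕ} (hx : ∀ j ∈ Icc 1 N, ⟪x j - x (j - 1), x j⟫ ≤ √(α j) * √(β j))
    {m : ℕ} (hm : m ≤ N) :
    ‖x m‖ ≤ √(∑ j ∈ Icc 1 N, α j) + √(∑ j ∈ Icc 1 N, β j) + ‖x 0‖ := by
  set A := √(∑ j ∈ Icc 1 N, α j)
  set B := √(∑ j ∈ Icc 1 N, β j)
  have henergy : ‖x m‖ ^ 2 ≤ ‖x 0‖ ^ 2 + ∑ j ∈ Icc 1 N, 2 * (√(α j) * √(β j)) :=
    le_add_sum_Icc_of_sub_le (f := fun j => ‖x j‖ ^ 2) (fun j => by positivity)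
      (fun j hj => (sq_norm_sub_sq_norm_le_two_mul_inner _ _).trans (by linarith [hx j hj])) hm
  have hcs : ∑ j ∈ Icc 1 N, √(α j) * √(β j) ≤ A * B := Real.sum_sqrt_mul_sqrt_le _ hα hβ
  rw [← mul_sum] at henergy
  have hA : 0 ≤ A := Real.sqrt_nonneg _
  have hB : 0 ≤ B := Real.sqrt_nonneg _
  refine (pow_le_pow_iff_left₀ (norm_nonneg _) (by positivity) two_ne_zero).mp ?_
  nlinarith [mul_nonneg hA hB, mul_nonneg hA (norm_nonneg (x 0)),
    mul_nonneg hB (norm_nonneg (x 0))]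

theorem stmt4_general {X : Type*} [AddCommGroup X] [Module ℝ X]
    {L V : Type*} [NormedAddCommGroup L] [InnerProductSpace ℝ L]
    [NormedAddCommGroup V] [InnerProductSpace ℝ V] [CompleteSpace V]
    (P : X →ₗ[ℝ] L) (G : X →ₗ[ℝ] V) (S : V →L[ℝ] V) (hS : IsSelfAdjoint S)
    (hSpos : ∀ ξ : V, 0 ≤ ⟪S ξ, ξ⟫)
    (R : X →ₗ[ℝ] X) (hR : ∀ u v : X, ⟪S (G (R u)), G v⟫ = ⟪P u, P v⟫)
    (N : ℕ) (hN : 1 ≤ N) (T : ℝ) (hT : 0 < T) (k : ℝ) (hk : k = T / N)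
    (w : ℕ → X) (δ : ℕ → X)
    (hδ : ∀ j, 1 ≤ j → j ≤ N → δ j = k⁻¹ • (w j - w (j - 1)))
    (m : ℕ) (hm : m ≤ N) :
    ‖P (w m)‖ ≤
      Real.sqrt (∑ j ∈ Finset.Icc 1 N, k * ⟪S (G (R (δ j))), G (R (δ j))⟫) +
      Real.sqrt (∑ j ∈ Finset.Icc 1 N, k * ⟪S (G (w j)), G (w j)⟫) +
      ‖P (w 0)‖ := by
  have hk0 : 0 < k := hk ▸ div_pos hT (by exact_mod_cast hN)
  have hSpositive : (S : V →ₗ[ℝ] V).IsPositive :=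
    (ContinuousLinearMap.isPositive_def'.mpr ⟨hS, hSpos⟩).toLinearMap
  refine norm_le_sqrt_add_sqrt_add_norm_of_inner_sub_le (P ∘ w)
    (fun j => mul_nonneg hk0.le (hSpos _)) (fun j => mul_nonneg hk0.le (hSpos _))
    (fun j hj => ?_) hm
  obtain ⟨hj1, hjN⟩ := mem_Icc.mp hj
  have hincrement : P (w j) - P (w (j - 1)) = k • P (δ j) := by
    rw [hδ j hj1 hjN, map_smul, smul_smul, mul_inv_cancel₀ hk0.ne', one_smul, map_sub]
  calc ⟪P (w j) - P (w (j - 1)), P (w j)⟫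
      = k * ⟪S (G (R (δ j))), G (w j)⟫ := by rw [hincrement, real_inner_smul_left, hR]
    _ ≤ k * (√⟪S (G (R (δ j))), G (R (δ j))⟫ * √⟪S (G (w j)), G (w j)⟫) :=
        mul_le_mul_of_nonneg_left (hSpositive.real_inner_map_le_sqrt_mul_sqrt _ _) hk0.le
    _ = √(k * ⟪S (G (R (δ j))), G (R (δ j))⟫) * √(k * ⟪S (G (w j)), G (w j)⟫) := by
        rw [Real.sqrt_mul hk0.le, Real.sqrt_mul hk0.le, mul_mul_mul_comm,
          Real.mul_self_sqrt hk0.le]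

/-- Estimate (4.4) of Lemma 4.2: uniform-in-time bound on the reconstructed discrete
solution, expressed through the discrete time sums. -/
theorem stmt4 {X : Type*} [AddCommGroup X] [Module ℝ X] [FiniteDimensional ℝ X]
    {L V : Type*} [NormedAddCommGroup L] [InnerProductSpace ℝ L] [CompleteSpace L]
    [NormedAddCommGroup V] [InnerProductSpace ℝ V] [CompleteSpace V]
    (P : X →ₗ[ℝ] L) (G : X →ₗ[ℝ] V) (S : V →L[ℝ] V) (hS : IsSelfAdjoint S)
    (hSpos : ∀ ξ : V, 0 ≤ ⟪S ξ, ξ⟫)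
    (R : X →ₗ[ℝ] X) (hR : ∀ u v : X, ⟪S (G (R u)), G v⟫ = ⟪P u, P v⟫)
    (N : ℕ) (hN : 1 ≤ N) (T : ℝ) (hT : 0 < T) (k : ℝ) (hk : k = T / N)
    (w : ℕ → X) (δ : ℕ → X)
    (hδ : ∀ j, 1 ≤ j → j ≤ N → δ j = k⁻¹ • (w j - w (j - 1)))
    (m : ℕ) (hm : m ≤ N) :
    ‖P (w m)‖ ≤
      Real.sqrt (∑ j ∈ Finset.Icc 1 N, k * ⟪S (G (R (δ j))), G (R (δ j))⟫) +
      Real.sqrt (∑ j ∈ Finset.Icc 1 N, k * ⟪S (G (w j)), G (w j)⟫) +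
      ‖P (w 0)‖ :=
  stmt4_general P G S hS hSpos R hR N hN T hT k hk w δ hδ m hm
end

section
/- Let X be a finite-dimensional real vector space, L and V real Hilbert spaces, P : X → L and G : X → V linear maps, and S : V → V a continuous self-adjoint linear operator with ⟨S ξ, ξ⟩ ≥ 0 for all ξ ∈ V. Let R : X → X be a linear map satisfying ⟨S G(R u), G v⟩_V = ⟨P u, P v⟩_L for all u, v ∈ X. Let N ≥ 1 be an integer, T > 0, k = T/N, and let w⁰, w¹, …, w^N ∈ X; set δʲ := (wʲ − w^{j−1})/k for j = 1,…,N. Then Σ_{j=1}^N k ⟨S G(R δʲ), G wʲ⟩ ≥ (1/2)‖P w^N‖²_L − (1/2)‖P w⁰‖²_L. -/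
/-!
Each step of the implicit scheme dissipates energy: by the compatibility relation defining `R`,
`k ⟨S G(R δʲ), G wʲ⟩ = ⟨P wʲ - P w^{j-1}, P wʲ⟩`, and `⟨a - b, a⟩ = ½‖a‖² - ½‖b‖² + ½‖a - b‖²`.
Dropping the nonnegative term `½‖a - b‖²` and telescoping gives the estimate.
-/

open scoped RealInnerProductSpace

theorem Finset.sum_Icc_one_sub_pred {M : Type*} [AddCommGroup M] (f : ℕ → M) (N : ℕ) :
    ∑ j ∈ Finset.Icc 1 N, (f j - f (j - 1)) = f N - f 0 := by
  induction N with
  | zero => simp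
  | succ n ih =>
    rw [Finset.sum_Icc_succ_top (by omega), ih, Nat.add_sub_cancel]
    abel

section InnerProductSpace

variable {E : Type*} [NormedAddCommGroup E] [InnerProductSpace ℝ E]

theorem half_norm_sq_sub_half_norm_sq_le_inner_sub (a b : E) :
    (1 / 2) * ‖a‖ ^ 2 - (1 / 2) * ‖b‖ ^ 2 ≤ ⟪a - b, a⟫ := by
  have h_expand : ‖a - b‖ ^ 2 = ‖a‖ ^ 2 - 2 * ⟪b, a⟫ + ‖b‖ ^ 2 := by
    rw [norm_sub_sq_real, real_inner_comm]
  have h_inner : ⟪a - b, a⟫ = ‖a‖ ^ 2 - ⟪b, a⟫ := by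
    rw [inner_sub_left, real_inner_self_eq_norm_sq]
  linarith [sq_nonneg ‖a - b‖]

theorem half_norm_sq_sub_half_norm_sq_le_sum_inner_sub (a : ℕ → E) (N : ℕ) :
    (1 / 2) * ‖a N‖ ^ 2 - (1 / 2) * ‖a 0‖ ^ 2 ≤
      ∑ j ∈ Finset.Icc 1 N, ⟪a j - a (j - 1), a j⟫ := by
  rw [← Finset.sum_Icc_one_sub_pred (fun j => (1 / 2) * ‖a j‖ ^ 2)]
  exact Finset.sum_le_sum fun j _ => half_norm_sq_sub_half_norm_sq_le_inner_sub _ _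

end InnerProductSpace

theorem stmt5_general {X : Type*} [AddCommGroup X] [Module ℝ X]
    {L V : Type*} [NormedAddCommGroup L] [InnerProductSpace ℝ L]
    [NormedAddCommGroup V] [InnerProductSpace ℝ V]
    (P : X →ₗ[ℝ] L) (G : X →ₗ[ℝ] V) (S : V →L[ℝ] V)
    (R : X →ₗ[ℝ] X) (hR : ∀ u v : X, ⟪S (G (R u)), G v⟫ = ⟪P u, P v⟫)
    (N : ℕ) (T : ℝ) (hT : 0 < T) (k : ℝ) (hk : k = T / N)
    (w : ℕ → X) (δ : ℕ → X)
    (hδ : ∀ j, 1 ≤ j → j ≤ N → δ j = k⁻¹ • (w j - w (j - 1))) :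
    (1 / 2) * ‖P (w N)‖ ^ 2 - (1 / 2) * ‖P (w 0)‖ ^ 2 ≤
      ∑ j ∈ Finset.Icc 1 N, k * ⟪S (G (R (δ j))), G (w j)⟫ := by
  refine (half_norm_sq_sub_half_norm_sq_le_sum_inner_sub (fun j => P (w j)) N).trans_eq ?_
  refine Finset.sum_congr rfl fun j hj => ?_
  obtain ⟨hj_pos, hj_le⟩ := Finset.mem_Icc.mp hj
  have hk_ne : k ≠ 0 := hk ▸ div_ne_zero hT.ne' (Nat.cast_ne_zero.mpr (by omega))
  rw [hR, hδ j hj_pos hj_le, map_smul, real_inner_smul_left, ← mul_assoc,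
    mul_inv_cancel₀ hk_ne, one_mul, map_sub]

/-- Estimate (4.5) of Lemma 4.2:
`Σ_{j=1}^N k ⟨S G(R δʲ), G wʲ⟩ ≥ (1/2)‖P w^N‖² − (1/2)‖P w⁰‖²`. -/
theorem stmt5 {X : Type*} [AddCommGroup X] [Module ℝ X] [FiniteDimensional ℝ X]
    {L V : Type*} [NormedAddCommGroup L] [InnerProductSpace ℝ L] [CompleteSpace L]
    [NormedAddCommGroup V] [InnerProductSpace ℝ V] [CompleteSpace V]
    (P : X →ₗ[ℝ] L) (G : X →ₗ[ℝ] V) (S : V →L[ℝ] V) (hS : IsSelfAdjoint S)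
    (hSpos : ∀ ξ : V, 0 ≤ ⟪S ξ, ξ⟫)
    (R : X →ₗ[ℝ] X) (hR : ∀ u v : X, ⟪S (G (R u)), G v⟫ = ⟪P u, P v⟫)
    (N : ℕ) (hN : 1 ≤ N) (T : ℝ) (hT : 0 < T) (k : ℝ) (hk : k = T / N)
    (w : ℕ → X) (δ : ℕ → X)
    (hδ : ∀ j, 1 ≤ j → j ≤ N → δ j = k⁻¹ • (w j - w (j - 1))) :
    (1 / 2) * ‖P (w N)‖ ^ 2 - (1 / 2) * ‖P (w 0)‖ ^ 2 ≤
      ∑ j ∈ Finset.Icc 1 N, k * ⟪S (G (R (δ j))), G (w j)⟫ :=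
  stmt5_general P G S R hR N T hT k hk w δ hδ
end

section
/- Let X be a finite-dimensional real vector space, L and V real Hilbert spaces, P : X → L and G : X → V linear maps, and S : V → V a continuous self-adjoint linear operator with ⟨S ξ, ξ⟩ ≥ 0 for all ξ ∈ V. Assume there is p ≥ 0 such that ‖P v‖²_L ≤ p² ⟨S G v, G v⟩ for all v ∈ X. Let R : X → X be a linear map satisfying ⟨S G(R u), G v⟩_V = ⟨P u, P v⟩_L for all u, v ∈ X. Let N ≥ 1 be an integer, T > 0, k = T/N, and let w⁰, w¹, …, w^N ∈ X; set δʲ := (wʲ − w^{j−1})/k for j = 1,…,N. Then Σ_{j=1}^N k ⟨S G(R δʲ), G(R δʲ)⟩ + (1 + p²/T) Σ_{j=1}^N k ⟨S G wʲ, G wʲ⟩ ≥ ‖P w^N‖²_L. -/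
/-!
Since `w^{j-1} = wʲ - k δʲ`, one time step raises `‖P w‖²` by at most
`2k⟪P δʲ, P wʲ⟫ = 2k⟪S G(R δʲ), G wʲ⟫`, and positivity of `S` bounds this by
`k⟪S G(R δʲ), G(R δʲ)⟫ + k⟪S G wʲ, G wʲ⟫`. So `‖P w^N‖²` exceeds every `‖P wʲ‖²` by at most the
sum `B` of these bounds. Averaging over `j = 1, …, N` and using `‖P wʲ‖² ≤ p² ⟪S G wʲ, G wʲ⟫`
with `N = T / k` gives `‖P w^N‖² ≤ B + (p² / T) ∑ k ⟪S G wʲ, G wʲ⟫`.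
-/

open scoped RealInnerProductSpace

open Finset

theorem le_add_sum_Ioc_of_sub_le {α : Type*} [AddCommGroup α] [PartialOrder α]
    [IsOrderedAddMonoid α] {f b : ℕ → α} {j n : ℕ} (hjn : j ≤ n)
    (h : ∀ i ∈ Ioc j n, f i - f (i - 1) ≤ b i) :
    f n ≤ f j + ∑ i ∈ Ioc j n, b i := by
  induction n, hjn using Nat.le_induction with
  | base => simp
  | succ n hjn ih =>
    have hlast := h (n + 1) (mem_Ioc.2 ⟨by omega, le_rfl⟩)
    have hprev := ih fun i hi => h i (Ioc_subset_Ioc_right n.le_succ hi)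
    rw [sum_Ioc_succ_top hjn, ← add_assoc]
    rw [Nat.add_sub_cancel, sub_le_iff_le_add'] at hlast
    exact hlast.trans (add_le_add_left hprev _)

theorem mul_le_sum_add_mul_sum_of_sub_le {f b : ℕ → ℝ} {N : ℕ}
    (hb : ∀ i ∈ Icc 1 N, 0 ≤ b i) (h : ∀ i ∈ Icc 1 N, f i - f (i - 1) ≤ b i) :
    N * f N ≤ ∑ j ∈ Icc 1 N, f j + N * ∑ i ∈ Icc 1 N, b i := by
  have hsub : ∀ j ∈ Icc 1 N, Ioc j N ⊆ Icc 1 N := fun j hj i hi => by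
    simp only [mem_Icc, mem_Ioc] at hj hi ⊢
    omega
  have hj : ∀ j ∈ Icc 1 N, f N ≤ f j + ∑ i ∈ Icc 1 N, b i := fun j hj =>
    calc f N ≤ f j + ∑ i ∈ Ioc j N, b i :=
          le_add_sum_Ioc_of_sub_le (mem_Icc.1 hj).2 fun i hi => h i (hsub j hj hi)
      _ ≤ f j + ∑ i ∈ Icc 1 N, b i :=
          add_le_add_right (sum_le_sum_of_subset_of_nonneg (hsub j hj) fun i hi _ => hb i hi) _
  simpa [sum_add_distrib] using sum_le_sum hj

theorem LinearMap.IsPositive.two_mul_inner_le {E : Type*} [NormedAddCommGroup E]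
    [InnerProductSpace ℝ E] {T : E →ₗ[ℝ] E} (hT : T.IsPositive) (x y : E) :
    2 * ⟪T x, y⟫ ≤ ⟪T x, x⟫ + ⟪T y, y⟫ := by
  have h := hT.inner_nonneg_left (x - y)
  rw [map_sub, inner_sub_left, inner_sub_right, inner_sub_right, hT.isSymmetric y x,
    real_inner_comm (T x) y] at h
  linarith

theorem norm_sq_sub_norm_sub_smul_sq_le {F : Type*} [NormedAddCommGroup F]
    [InnerProductSpace ℝ F] (a d : F) (k : ℝ) :
    ‖a‖ ^ 2 - ‖a - k • d‖ ^ 2 ≤ 2 * k * ⟪d, a⟫ := by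
  rw [norm_sub_sq_real, real_inner_smul_right, norm_smul, real_inner_comm]
  nlinarith [sq_nonneg (‖k‖ * ‖d‖)]

theorem norm_sq_sub_norm_sq_le_energy {X L V : Type*} [AddCommGroup X] [Module ℝ X]
    [NormedAddCommGroup L] [InnerProductSpace ℝ L] [NormedAddCommGroup V]
    [InnerProductSpace ℝ V] {P : X →ₗ[ℝ] L} {G : X →ₗ[ℝ] V} {S : V →ₗ[ℝ] V} {R : X →ₗ[ℝ] X}
    (hS : S.IsPositive) (hR : ∀ u v : X, ⟪S (G (R u)), G v⟫ = ⟪P u, P v⟫)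
    {k : ℝ} (hk : 0 ≤ k) (u v : X) :
    ‖P v‖ ^ 2 - ‖P (v - k • u)‖ ^ 2 ≤
      k * ⟪S (G (R u)), G (R u)⟫ + k * ⟪S (G v), G v⟫ := by
  rw [map_sub, map_smul]
  calc ‖P v‖ ^ 2 - ‖P v - k • P u‖ ^ 2 ≤ 2 * k * ⟪P u, P v⟫ :=
        norm_sq_sub_norm_sub_smul_sq_le _ _ _
    _ = k * (2 * ⟪S (G (R u)), G v⟫) := by rw [hR]; ring
    _ ≤ k * (⟪S (G (R u)), G (R u)⟫ + ⟪S (G v), G v⟫) := by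
        gcongr
        exact hS.two_mul_inner_le _ _
    _ = _ := mul_add _ _ _

theorem stmt6_general {X : Type*} [AddCommGroup X] [Module ℝ X]
    {L V : Type*} [NormedAddCommGroup L] [InnerProductSpace ℝ L]
    [NormedAddCommGroup V] [InnerProductSpace ℝ V] [CompleteSpace V]
    (P : X →ₗ[ℝ] L) (G : X →ₗ[ℝ] V) (S : V →L[ℝ] V) (hS : IsSelfAdjoint S)
    (hSpos : ∀ ξ : V, 0 ≤ ⟪S ξ, ξ⟫)
    (p : ℝ) (hP : ∀ v : X, ‖P v‖ ^ 2 ≤ p ^ 2 * ⟪S (G v), G v⟫)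
    (R : X →ₗ[ℝ] X) (hR : ∀ u v : X, ⟪S (G (R u)), G v⟫ = ⟪P u, P v⟫)
    (N : ℕ) (hN : 1 ≤ N) (T : ℝ) (hT : 0 < T) (k : ℝ) (hk : k = T / N)
    (w : ℕ → X) (δ : ℕ → X)
    (hδ : ∀ j, 1 ≤ j → j ≤ N → δ j = k⁻¹ • (w j - w (j - 1))) :
    ‖P (w N)‖ ^ 2 ≤
      (∑ j ∈ Finset.Icc 1 N, k * ⟪S (G (R (δ j))), G (R (δ j))⟫) +
      (1 + p ^ 2 / T) * ∑ j ∈ Finset.Icc 1 N, k * ⟪S (G (w j)), G (w j)⟫ := by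
  have hN0 : (0 : ℝ) < N := by exact_mod_cast hN
  have hk0 : 0 < k := hk ▸ div_pos hT hN0
  have hSpositive : (S : V →ₗ[ℝ] V).IsPositive :=
    (LinearMap.isPositive_iff _).2 ⟨ContinuousLinearMap.isSelfAdjoint_iff_isSymmetric.1 hS, hSpos⟩
  have hstep : ∀ j ∈ Icc 1 N, ‖P (w j)‖ ^ 2 - ‖P (w (j - 1))‖ ^ 2 ≤
      k * ⟪S (G (R (δ j))), G (R (δ j))⟫ + k * ⟪S (G (w j)), G (w j)⟫ := by
    intro j hj
    obtain ⟨h1, h2⟩ := mem_Icc.1 hj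
    have hprev : w (j - 1) = w j - k • δ j := by
      rw [hδ j h1 h2, smul_smul, mul_inv_cancel₀ hk0.ne', one_smul, sub_sub_cancel]
    rw [hprev]
    exact norm_sq_sub_norm_sq_le_energy hSpositive hR hk0.le _ _
  have hgrowth := mul_le_sum_add_mul_sum_of_sub_le
    (fun j _ => add_nonneg (mul_nonneg hk0.le (hSpos _)) (mul_nonneg hk0.le (hSpos _))) hstep
  have hPsum : ∑ j ∈ Icc 1 N, ‖P (w j)‖ ^ 2 ≤
      p ^ 2 / T * (N * ∑ j ∈ Icc 1 N, k * ⟪S (G (w j)), G (w j)⟫) :=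
    calc ∑ j ∈ Icc 1 N, ‖P (w j)‖ ^ 2 ≤ ∑ j ∈ Icc 1 N, p ^ 2 * ⟪S (G (w j)), G (w j)⟫ :=
          sum_le_sum fun j _ => hP (w j)
      _ = _ := by
          simp only [mul_sum]
          refine sum_congr rfl fun j _ => ?_
          rw [hk]
          field_simp
  rw [sum_add_distrib] at hgrowth
  refine le_of_mul_le_mul_left ?_ hN0
  linear_combination hgrowth + hPsum

/-- Estimate (4.6) of Lemma 4.2:
`Σ k⟨S G(R δʲ), G(R δʲ)⟩ + (1 + p²/T) Σ k⟨S G wʲ, G wʲ⟩ ≥ ‖P w^N‖²`. -/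
theorem stmt6 {X : Type*} [AddCommGroup X] [Module ℝ X] [FiniteDimensional ℝ X]
    {L V : Type*} [NormedAddCommGroup L] [InnerProductSpace ℝ L] [CompleteSpace L]
    [NormedAddCommGroup V] [InnerProductSpace ℝ V] [CompleteSpace V]
    (P : X →ₗ[ℝ] L) (G : X →ₗ[ℝ] V) (S : V →L[ℝ] V) (hS : IsSelfAdjoint S)
    (hSpos : ∀ ξ : V, 0 ≤ ⟪S ξ, ξ⟫)
    (p : ℝ) (hp : 0 ≤ p) (hP : ∀ v : X, ‖P v‖ ^ 2 ≤ p ^ 2 * ⟪S (G v), G v⟫)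
    (R : X →ₗ[ℝ] X) (hR : ∀ u v : X, ⟪S (G (R u)), G v⟫ = ⟪P u, P v⟫)
    (N : ℕ) (hN : 1 ≤ N) (T : ℝ) (hT : 0 < T) (k : ℝ) (hk : k = T / N)
    (w : ℕ → X) (δ : ℕ → X)
    (hδ : ∀ j, 1 ≤ j → j ≤ N → δ j = k⁻¹ • (w j - w (j - 1))) :
    ‖P (w N)‖ ^ 2 ≤
      (∑ j ∈ Finset.Icc 1 N, k * ⟪S (G (R (δ j))), G (R (δ j))⟫) +
      (1 + p ^ 2 / T) * ∑ j ∈ Finset.Icc 1 N, k * ⟪S (G (w j)), G (w j)⟫ :=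
  stmt6_general P G S hS hSpos p hP R hR N hN T hT k hk w δ hδ
end

section
/- Let X be a finite-dimensional real vector space, L and V real Hilbert spaces, and P : X → L, G : X → V linear maps such that v ↦ ‖G v‖ is a norm on X (i.e. G is injective). Let N ≥ 1 be an integer, k > 0, α > 0, let Φ : L → L be a continuous linear operator with ‖Φ‖ ≤ 1, and for m = 1,…,N let Λᵐ : V → V be a continuous linear operator with ⟨Λᵐ ξ, ξ⟩ ≥ α‖ξ‖² for all ξ ∈ V. Let ξ₀ ∈ L and, for m = 1,…,N, fᵐ ∈ L and Fᵐ ∈ V. Then there exist w⁰, w¹, …, w^N ∈ X such that: (i) ⟨P w⁰ − Φ(P w^N), P u⟩_L = ⟨ξ₀, P u⟩_L for all u ∈ X, and (ii) for all m = 1,…,N and all u ∈ X, ⟨P((wᵐ − w^{m−1})/k), P u⟩_L + ⟨Λᵐ G wᵐ, G u⟩_V = ⟨fᵐ, P u⟩_L − ⟨Fᵐ, G u⟩_V. Moreover the solution is unique in the sense that if (w̃⁰, …, w̃^N) is another family satisfying (i) and (ii), then P w̃⁰ = P w⁰ and w̃ᵐ = wᵐ for all m = 1,…,N. -/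
/-!
The scheme is a square linear system: the unknowns `(P w⁰, w¹, …, w^N)` range over
`range P × X^N`, and the equations are tested against the same space. Uniqueness is an energy
estimate. For the homogeneous scheme, testing step `m` with `wᵐ` gives
`‖P wᵐ‖² + k α ‖G wᵐ‖² ≤ ‖P wᵐ⁻¹‖ ‖P wᵐ‖`, so `‖P wᵐ‖` is non-increasing in `m`, while the time
condition tested with `w⁰` and `‖Φ‖ ≤ 1` give `‖P w⁰‖ ≤ ‖P w^N‖`. Hence all `‖P wᵐ‖` are equal,
which forces `G wᵐ = 0`. In finite dimension the injective square system is also surjective.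
-/

open scoped RealInnerProductSpace

lemma apply_eq_apply_zero_of_succ_le {α : Type*} [PartialOrder α] {d : ℕ → α} {N : ℕ}
    (hdec : ∀ m < N, d (m + 1) ≤ d m) (hcyc : d 0 ≤ d N) {m : ℕ} (hm : m ≤ N) :
    d m = d 0 := by
  have hanti : Antitone fun n => d (min n N) := antitone_nat_of_succ_le fun n => by
    rcases lt_or_ge n N with h | h
    · simpa [min_eq_left h.le, min_eq_left (Nat.succ_le_of_lt h)] using hdec n h
    · simp [min_eq_right h, min_eq_right (h.trans n.le_succ)]
  have hle : ∀ {i j}, i ≤ j → j ≤ N → d j ≤ d i := fun {i j} hij hj => by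
    simpa [min_eq_left hj, min_eq_left (hij.trans hj)] using hanti hij
  exact le_antisymm (hle m.zero_le hm) (hcyc.trans (hle hm le_rfl))

section InnerProduct

variable {L : Type*} [NormedAddCommGroup L] [InnerProductSpace ℝ L]

lemma norm_le_of_inner_sub_apply_eq_zero {Φ : L →L[ℝ] L} (hΦ : ‖Φ‖ ≤ 1) {p q : L}
    (h : ⟪p - Φ q, p⟫ = 0) : ‖p‖ ≤ ‖q‖ := by
  rw [inner_sub_left, sub_eq_zero, real_inner_self_eq_norm_mul_norm] at h
  have hΦq : ‖Φ q‖ ≤ ‖q‖ := by simpa using Φ.le_of_opNorm_le hΦ q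
  have : ‖p‖ * ‖p‖ ≤ ‖q‖ * ‖p‖ := h ▸ (real_inner_le_norm _ _).trans (by gcongr)
  nlinarith [norm_nonneg p, norm_nonneg q]

lemma norm_sq_add_mul_le_of_inner_smul_sub_add_eq_zero {k c : ℝ} (hk : 0 < k) {p q : L}
    (h : ⟪k⁻¹ • (p - q), p⟫ + c = 0) : ‖p‖ ^ 2 + k * c ≤ ‖q‖ * ‖p‖ := by
  rw [real_inner_smul_left, inner_sub_left, real_inner_self_eq_norm_sq] at h
  have hqp : ⟪q, p⟫ ≤ ‖q‖ * ‖p‖ := real_inner_le_norm q p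
  have : ‖p‖ ^ 2 - ⟪q, p⟫ + k * c = 0 := by field_simp at h; linarith
  linarith

end InnerProduct

section Scheme

variable {X : Type*} [AddCommGroup X] [Module ℝ X]
  {L V : Type*} [NormedAddCommGroup L] [InnerProductSpace ℝ L]
  [NormedAddCommGroup V] [InnerProductSpace ℝ V]
  (P : X →ₗ[ℝ] L) (G : X →ₗ[ℝ] V) (Φ : L →L[ℝ] L) (Λ : ℕ → V →L[ℝ] V) (N : ℕ) (k : ℝ)

def IsEulerSolution (ξ₀ : L) (f : ℕ → L) (F : ℕ → V) (w : ℕ → X) : Prop :=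
  (∀ u : X, ⟪P (w 0) - Φ (P (w N)), P u⟫ = ⟪ξ₀, P u⟫) ∧
  ∀ m, 1 ≤ m → m ≤ N → ∀ u : X,
    ⟪P (k⁻¹ • (w m - w (m - 1))), P u⟫ + ⟪Λ m (G (w m)), G u⟫ = ⟪f m, P u⟫ - ⟪F m, G u⟫

open LinearMap

local notation "ev" => LinearMap.proj (R := ℝ) (φ := fun _ : ℕ => X)

def finSeq : X × (Fin N → X) →ₗ[ℝ] ℕ → X :=
  LinearMap.pi fun
    | 0 => fst ℝ X (Fin N → X)
    | m + 1 => if h : m < N then proj ⟨m, h⟩ ∘ₗ snd ℝ X (Fin N → X) else 0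

/-- The time condition is tested against `P u` only, so its residual is a functional on
`range P`; slot `i` of the second component is step `m = i + 1`. -/
noncomputable def eulerResidual :
    (ℕ → X) →ₗ[ℝ] Module.Dual ℝ (range P) × (Fin N → Module.Dual ℝ X) :=
  prod ((range P).subtype.dualMap ∘ₗ innerₗ L ∘ₗ (P ∘ₗ ev 0 - Φ.toLinearMap ∘ₗ P ∘ₗ ev N))
    (LinearMap.pi fun i =>
      P.dualMap ∘ₗ innerₗ L ∘ₗ P ∘ₗ (k⁻¹ • (ev (i + 1) - ev i)) +
        G.dualMap ∘ₗ innerₗ V ∘ₗ (Λ (i + 1)).toLinearMap ∘ₗ G ∘ₗ ev (i + 1))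

noncomputable def eulerData (ξ₀ : L) (f : ℕ → L) (F : ℕ → V) :
    Module.Dual ℝ (range P) × (Fin N → Module.Dual ℝ X) :=
  ((range P).subtype.dualMap (innerₗ L ξ₀),
    fun i => P.dualMap (innerₗ L (f (i + 1))) - G.dualMap (innerₗ V (F (i + 1))))

variable {P G Φ Λ N k}

lemma IsEulerSolution.sub {ξ₀ ξ₀' : L} {f f' : ℕ → L} {F F' : ℕ → V} {w w' : ℕ → X}
    (hw : IsEulerSolution P G Φ Λ N k ξ₀ f F w) (hw' : IsEulerSolution P G Φ Λ N k ξ₀' f' F' w') :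
    IsEulerSolution P G Φ Λ N k (ξ₀ - ξ₀') (f - f') (F - F') (w - w') := by
  refine ⟨fun u => ?_, fun m h1m hmN u => ?_⟩
  · have h := hw.1 u
    have h' := hw'.1 u
    simp only [Pi.sub_apply, map_sub, inner_sub_left] at h h' ⊢
    linear_combination h - h'
  · have h := hw.2 m h1m hmN u
    have h' := hw'.2 m h1m hmN u
    simp only [Pi.sub_apply, map_sub, map_smul, inner_sub_left, real_inner_smul_left] at h h' ⊢
    linear_combination h - h'

theorem IsEulerSolution.eq_zero (hG : Function.Injective G) (hN : 1 ≤ N) (hk : 0 < k)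
    {α : ℝ} (hα : 0 < α) (hΦ : ‖Φ‖ ≤ 1)
    (hΛ : ∀ m, 1 ≤ m → m ≤ N → ∀ ξ : V, α * ‖ξ‖ ^ 2 ≤ ⟪Λ m ξ, ξ⟫) {δ : ℕ → X}
    (hδ : IsEulerSolution P G Φ Λ N k 0 0 0 δ) :
    P (δ 0) = 0 ∧ ∀ m, 1 ≤ m → m ≤ N → δ m = 0 := by
  set d : ℕ → ℝ := fun m => ‖P (δ m)‖
  have hd : ∀ m, 0 ≤ d m := fun m => norm_nonneg _
  have henergy : ∀ m < N, d (m + 1) ^ 2 + k * (α * ‖G (δ (m + 1))‖ ^ 2) ≤ d m * d (m + 1) := by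
    intro m hm
    have h := hδ.2 (m + 1) (by omega) hm (δ (m + 1))
    simp only [Pi.zero_apply, inner_zero_left, sub_zero, map_smul, map_sub,
      add_tsub_cancel_right] at h
    have hstep := norm_sq_add_mul_le_of_inner_smul_sub_add_eq_zero hk h
    have hcoer := hΛ (m + 1) (by omega) hm (G (δ (m + 1)))
    nlinarith
  have hconst : ∀ m ≤ N, d m = d 0 := by
    refine fun m => apply_eq_apply_zero_of_succ_le (fun m hm => ?_) ?_
    · have h := henergy m hm
      have : 0 ≤ k * (α * ‖G (δ (m + 1))‖ ^ 2) := by positivity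
      nlinarith [hd m, hd (m + 1)]
    · refine norm_le_of_inner_sub_apply_eq_zero hΦ ?_
      simpa using hδ.1 (δ 0)
  have hzero : ∀ m, 1 ≤ m → m ≤ N → δ m = 0 := by
    intro m h1m hmN
    obtain ⟨m, rfl⟩ := Nat.exists_eq_add_of_le' h1m
    have h := henergy m (by omega)
    rw [hconst m (by omega), hconst (m + 1) hmN] at h
    have : k * α * ‖G (δ (m + 1))‖ ^ 2 ≤ 0 := by linarith
    have : ‖G (δ (m + 1))‖ ^ 2 ≤ 0 := nonpos_of_mul_nonpos_right this (mul_pos hk hα)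
    exact hG (by simpa using this)
  refine ⟨?_, hzero⟩
  simpa [d, hzero N hN le_rfl] using (hconst N le_rfl).symm

theorem IsEulerSolution.unique (hG : Function.Injective G) (hN : 1 ≤ N) (hk : 0 < k)
    {α : ℝ} (hα : 0 < α) (hΦ : ‖Φ‖ ≤ 1)
    (hΛ : ∀ m, 1 ≤ m → m ≤ N → ∀ ξ : V, α * ‖ξ‖ ^ 2 ≤ ⟪Λ m ξ, ξ⟫)
    {ξ₀ : L} {f : ℕ → L} {F : ℕ → V} {w w' : ℕ → X}
    (hw : IsEulerSolution P G Φ Λ N k ξ₀ f F w) (hw' : IsEulerSolution P G Φ Λ N k ξ₀ f F w') :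
    P (w' 0) = P (w 0) ∧ ∀ m, 1 ≤ m → m ≤ N → w' m = w m := by
  have hδ := hw'.sub hw
  rw [sub_self, sub_self, sub_self] at hδ
  obtain ⟨h0, hm⟩ := hδ.eq_zero hG hN hk hα hΦ hΛ
  exact ⟨by simpa [sub_eq_zero] using h0, fun m h1m hmN => sub_eq_zero.mp (hm m h1m hmN)⟩

lemma isEulerSolution_of_eulerResidual_eq {ξ₀ : L} {f : ℕ → L} {F : ℕ → V} {w : ℕ → X}
    (h : eulerResidual P G Φ Λ N k w = eulerData P G N ξ₀ f F) :
    IsEulerSolution P G Φ Λ N k ξ₀ f F w := by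
  refine ⟨fun u => ?_, fun m h1m hmN u => ?_⟩
  · simpa [eulerResidual, eulerData, inner_sub_left, real_inner_smul_left] using
      LinearMap.congr_fun (congrArg Prod.fst h) ⟨P u, u, rfl⟩
  · obtain ⟨i, rfl⟩ := Nat.exists_eq_add_of_le' h1m
    simpa [eulerResidual, eulerData, inner_sub_left, real_inner_smul_left] using
      LinearMap.congr_fun (congrFun (congrArg Prod.snd h) ⟨i, hmN⟩) u

lemma injective_eulerResidual_comp (hG : Function.Injective G) (hN : 1 ≤ N) (hk : 0 < k)
    {α : ℝ} (hα : 0 < α) (hΦ : ‖Φ‖ ≤ 1)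
    (hΛ : ∀ m, 1 ≤ m → m ≤ N → ∀ ξ : V, α * ‖ξ‖ ^ 2 ≤ ⟪Λ m ξ, ξ⟫)
    {s : range P →ₗ[ℝ] X} (hs : P.rangeRestrict ∘ₗ s = LinearMap.id) :
    Function.Injective (eulerResidual P G Φ Λ N k ∘ₗ finSeq N ∘ₗ s.prodMap LinearMap.id) := by
  rw [← ker_eq_bot, Submodule.eq_bot_iff]
  rintro ⟨z, v⟩ hy
  have hsol : IsEulerSolution P G Φ Λ N k 0 0 0 (finSeq N (s z, v)) :=
    isEulerSolution_of_eulerResidual_eq (hy.trans (by ext <;> simp [eulerData]))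
  obtain ⟨hz, hv⟩ := hsol.eq_zero hG hN hk hα hΦ hΛ
  have hPs : P (s z) = z := congrArg Subtype.val (LinearMap.congr_fun hs z)
  refine Prod.ext (Subtype.ext ?_) (funext fun i => ?_)
  · simpa [finSeq, hPs] using hz
  · simpa [finSeq] using hv (i + 1) (by omega) i.isLt

end Scheme

theorem stmt8_general {X : Type*} [AddCommGroup X] [Module ℝ X] [FiniteDimensional ℝ X]
    {L V : Type*} [NormedAddCommGroup L] [InnerProductSpace ℝ L]
    [NormedAddCommGroup V] [InnerProductSpace ℝ V]
    (P : X →ₗ[ℝ] L) (G : X →ₗ[ℝ] V) (hG : Function.Injective G)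
    (N : ℕ) (hN : 1 ≤ N) (k : ℝ) (hk : 0 < k) (α : ℝ) (hα : 0 < α)
    (Φ : L →L[ℝ] L) (hΦ : ‖Φ‖ ≤ 1)
    (Λ : ℕ → V →L[ℝ] V)
    (hΛ : ∀ m, 1 ≤ m → m ≤ N → ∀ ξ : V, α * ‖ξ‖ ^ 2 ≤ ⟪Λ m ξ, ξ⟫)
    (ξ₀ : L) (f : ℕ → L) (F : ℕ → V) :
    ∃ w : ℕ → X,
      (∀ u : X, ⟪P (w 0) - Φ (P (w N)), P u⟫ = ⟪ξ₀, P u⟫) ∧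
      (∀ m, 1 ≤ m → m ≤ N → ∀ u : X,
        ⟪P (k⁻¹ • (w m - w (m - 1))), P u⟫ + ⟪Λ m (G (w m)), G u⟫ =
          ⟪f m, P u⟫ - ⟪F m, G u⟫) ∧
      ∀ w' : ℕ → X,
        (∀ u : X, ⟪P (w' 0) - Φ (P (w' N)), P u⟫ = ⟪ξ₀, P u⟫) →
        (∀ m, 1 ≤ m → m ≤ N → ∀ u : X,
          ⟪P (k⁻¹ • (w' m - w' (m - 1))), P u⟫ + ⟪Λ m (G (w' m)), G u⟫ =
            ⟪f m, P u⟫ - ⟪F m, G u⟫) →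
        P (w' 0) = P (w 0) ∧ ∀ m, 1 ≤ m → m ≤ N → w' m = w m := by
  obtain ⟨s, hs⟩ := P.rangeRestrict.exists_rightInverse_of_surjective P.range_rangeRestrict
  have hdim : Module.finrank ℝ (LinearMap.range P × (Fin N → X)) =
      Module.finrank ℝ (Module.Dual ℝ (LinearMap.range P) × (Fin N → Module.Dual ℝ X)) := by
    simp [Module.finrank_prod, Module.finrank_pi_fintype, Subspace.dual_finrank_eq]
  obtain ⟨y, hy⟩ := (LinearMap.injective_iff_surjective_of_finrank_eq_finrank hdim).mp
    (injective_eulerResidual_comp hG hN hk hα hΦ hΛ hs) (eulerData P G N ξ₀ f F)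
  have hw := isEulerSolution_of_eulerResidual_eq (w := finSeq N (s.prodMap LinearMap.id y)) hy
  exact ⟨_, hw.1, hw.2, fun w' h₁ h₂ => hw.unique hG hN hk hα hΦ hΛ ⟨h₁, h₂⟩⟩

/-- Theorem 3.2: existence and uniqueness of the solution of the implicit Euler
gradient scheme with general time condition. -/
theorem stmt8 {X : Type*} [AddCommGroup X] [Module ℝ X] [FiniteDimensional ℝ X]
    {L V : Type*} [NormedAddCommGroup L] [InnerProductSpace ℝ L] [CompleteSpace L]
    [NormedAddCommGroup V] [InnerProductSpace ℝ V] [CompleteSpace V]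
    (P : X →ₗ[ℝ] L) (G : X →ₗ[ℝ] V) (hG : Function.Injective G)
    (N : ℕ) (hN : 1 ≤ N) (k : ℝ) (hk : 0 < k) (α : ℝ) (hα : 0 < α)
    (Φ : L →L[ℝ] L) (hΦ : ‖Φ‖ ≤ 1)
    (Λ : ℕ → V →L[ℝ] V)
    (hΛ : ∀ m, 1 ≤ m → m ≤ N → ∀ ξ : V, α * ‖ξ‖ ^ 2 ≤ ⟪Λ m ξ, ξ⟫)
    (ξ₀ : L) (f : ℕ → L) (F : ℕ → V) :
    ∃ w : ℕ → X,
      (∀ u : X, ⟪P (w 0) - Φ (P (w N)), P u⟫ = ⟪ξ₀, P u⟫) ∧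
      (∀ m, 1 ≤ m → m ≤ N → ∀ u : X,
        ⟪P (k⁻¹ • (w m - w (m - 1))), P u⟫ + ⟪Λ m (G (w m)), G u⟫ =
          ⟪f m, P u⟫ - ⟪F m, G u⟫) ∧
      ∀ w' : ℕ → X,
        (∀ u : X, ⟪P (w' 0) - Φ (P (w' N)), P u⟫ = ⟪ξ₀, P u⟫) →
        (∀ m, 1 ≤ m → m ≤ N → ∀ u : X,
          ⟪P (k⁻¹ • (w' m - w' (m - 1))), P u⟫ + ⟪Λ m (G (w' m)), G u⟫ =
            ⟪f m, P u⟫ - ⟪F m, G u⟫) →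
        P (w' 0) = P (w 0) ∧ ∀ m, 1 ≤ m → m ≤ N → w' m = w m :=
  stmt8_general P G hG N hN k hk α hα Φ hΦ Λ hΛ ξ₀ f F
end

section
/- Let V be a real Hilbert space, M ≥ 1, α > 0, and let A : V → V be a continuous linear operator with ‖A v‖ ≤ M‖v‖ and ⟨A v, v⟩ ≥ α‖v‖² for all v ∈ V. Let A_s := (A + A*)/2 and A_a := (A − A*)/2, where A* is the adjoint of A. If B : V → V is a continuous self-adjoint linear operator with B ∘ B = A_s, then √α ‖v‖ ≤ ‖B v‖ ≤ √M ‖v‖ for all v ∈ V; if moreover B is bijective, then ‖B⁻¹(A_a v)‖ ≤ (M/√α) ‖v‖ for all v ∈ V. -/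
/-!
Since `B` is self-adjoint, `‖B v‖² = ⟪B² v, v⟫ = ⟪A_s v, v⟫ = ⟪A v, v⟫`, which lies
between `α‖v‖²` and `M‖v‖²`; taking square roots gives both bounds on `B`. For the last
claim, `B w = A_a v` has norm at most `M‖v‖` because `A*` is bounded by `M` as well, and
the lower bound on `B` turns this into `√α‖w‖ ≤ M‖v‖`.
-/

open scoped RealInnerProductSpace InnerProduct

namespace Real

lemma sqrt_mul_le_of_mul_sq_le {c x y : ℝ} (hx : 0 ≤ x) (hy : 0 ≤ y)
    (h : c * x ^ 2 ≤ y ^ 2) : √c * x ≤ y := by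
  rw [← sqrt_sq hx, ← sqrt_mul' c (sq_nonneg x)]
  exact (sqrt_le_left hy).mpr h

lemma le_sqrt_mul_of_sq_le_mul_sq {c x y : ℝ} (hx : 0 ≤ x) (h : y ^ 2 ≤ c * x ^ 2) :
    y ≤ √c * x := by
  rw [← sqrt_sq hx, ← sqrt_mul' c (sq_nonneg x)]
  exact le_sqrt_of_sq_le h

end Real

namespace ContinuousLinearMap

variable {V : Type*} [NormedAddCommGroup V] [InnerProductSpace ℝ V] [CompleteSpace V]

lemma inner_adjoint_apply_self (A : V →L[ℝ] V) (v : V) : ⟪(A†) v, v⟫ = ⟪A v, v⟫ := by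
  rw [adjoint_inner_left, real_inner_comm]

lemma inner_symmPart_apply_self (A : V →L[ℝ] V) (v : V) :
    ⟪((2⁻¹ : ℝ) • (A + A†)) v, v⟫ = ⟪A v, v⟫ := by
  rw [smul_apply, add_apply, real_inner_smul_left, inner_add_left, inner_adjoint_apply_self]
  ring

lemma _root_.IsSelfAdjoint.norm_apply_sq {B : V →L[ℝ] V} (hB : IsSelfAdjoint B) (v : V) :
    ‖B v‖ ^ 2 = ⟪(B ∘L B) v, v⟫ := by
  simpa only [isSelfAdjoint_iff'.mp hB, RCLike.re_to_real] using
    apply_norm_sq_eq_inner_adjoint_left B v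

lemma norm_adjoint_apply_le {A : V →L[ℝ] V} {M : ℝ} (hA : ∀ v, ‖A v‖ ≤ M * ‖v‖)
    (v : V) : ‖(A†) v‖ ≤ M * ‖v‖ := by
  rcases eq_or_ne v 0 with rfl | hv
  · simp
  have hM : 0 ≤ M :=
    nonneg_of_mul_nonneg_left ((norm_nonneg _).trans (hA v)) (norm_pos_iff.mpr hv)
  calc ‖(A†) v‖ ≤ ‖A†‖ * ‖v‖ := le_opNorm _ _
    _ = ‖A‖ * ‖v‖ := by rw [LinearIsometryEquiv.norm_map]
    _ ≤ M * ‖v‖ := by gcongr; exact opNorm_le_bound _ hM hA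

lemma norm_antisymmPart_apply_le {A : V →L[ℝ] V} {M : ℝ} (hA : ∀ v, ‖A v‖ ≤ M * ‖v‖)
    (v : V) : ‖((2⁻¹ : ℝ) • (A - A†)) v‖ ≤ M * ‖v‖ := by
  rw [smul_apply, sub_apply, norm_smul, Real.norm_of_nonneg (by norm_num)]
  have := norm_sub_le (A v) ((A†) v)
  linarith [hA v, norm_adjoint_apply_le hA v]

end ContinuousLinearMap

open ContinuousLinearMap

theorem stmt10_general {V : Type*} [NormedAddCommGroup V] [InnerProductSpace ℝ V] [CompleteSpace V]
    (M α : ℝ) (hα : 0 < α) (A : V →L[ℝ] V)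
    (hAM : ∀ v : V, ‖A v‖ ≤ M * ‖v‖) (hAα : ∀ v : V, α * ‖v‖ ^ 2 ≤ ⟪A v, v⟫)
    (B : V →L[ℝ] V) (hB : IsSelfAdjoint B)
    (hBB : B ∘L B = (2⁻¹ : ℝ) • (A + ContinuousLinearMap.adjoint A)) :
    (∀ v : V, Real.sqrt α * ‖v‖ ≤ ‖B v‖ ∧ ‖B v‖ ≤ Real.sqrt M * ‖v‖) ∧
    (Function.Bijective B → ∀ v w : V,
      B w = ((2⁻¹ : ℝ) • (A - ContinuousLinearMap.adjoint A)) v →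
      ‖w‖ ≤ M / Real.sqrt α * ‖v‖) := by
  have hBsq (v : V) : ‖B v‖ ^ 2 = ⟪A v, v⟫ := by
    rw [hB.norm_apply_sq, hBB, inner_symmPart_apply_self]
  have lower (v : V) : √α * ‖v‖ ≤ ‖B v‖ :=
    Real.sqrt_mul_le_of_mul_sq_le (norm_nonneg v) (norm_nonneg _) (hBsq v ▸ hAα v)
  refine ⟨fun v => ⟨lower v, Real.le_sqrt_mul_of_sq_le_mul_sq (norm_nonneg v) ?_⟩, ?_⟩
  · calc ‖B v‖ ^ 2 = ⟪A v, v⟫ := hBsq v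
      _ ≤ ‖A v‖ * ‖v‖ := real_inner_le_norm _ _
      _ ≤ M * ‖v‖ ^ 2 := by nlinarith [hAM v, norm_nonneg v]
  · intro _ v w hw
    have hw' : √α * ‖w‖ ≤ M * ‖v‖ :=
      (lower w).trans (hw ▸ norm_antisymmPart_apply_le hAM v)
    rw [div_mul_eq_mul_div, le_div_iff₀ (Real.sqrt_pos.mpr hα)]
    linarith

/-- Estimates (4.9), (4.10) and the bound `‖A_s^{-1/2} A_a v‖ ≤ (M/√α)‖v‖` from the
proof of Lemma 4.3: if `B` is a self-adjoint square root of the symmetric part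
`A_s = (A + A*)/2` of an `M`-continuous `α`-coercive operator `A`, then
`√α‖v‖ ≤ ‖B v‖ ≤ √M‖v‖`, and if `B` is bijective then `‖B⁻¹(A_a v)‖ ≤ (M/√α)‖v‖`
where `A_a = (A − A*)/2`. -/
theorem stmt10 {V : Type*} [NormedAddCommGroup V] [InnerProductSpace ℝ V] [CompleteSpace V]
    (M α : ℝ) (hM : 1 ≤ M) (hα : 0 < α) (A : V →L[ℝ] V)
    (hAM : ∀ v : V, ‖A v‖ ≤ M * ‖v‖) (hAα : ∀ v : V, α * ‖v‖ ^ 2 ≤ ⟪A v, v⟫)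
    (B : V →L[ℝ] V) (hB : IsSelfAdjoint B)
    (hBB : B ∘L B = (2⁻¹ : ℝ) • (A + ContinuousLinearMap.adjoint A)) :
    (∀ v : V, Real.sqrt α * ‖v‖ ≤ ‖B v‖ ∧ ‖B v‖ ≤ Real.sqrt M * ‖v‖) ∧
    (Function.Bijective B → ∀ v w : V,
      B w = ((2⁻¹ : ℝ) • (A - ContinuousLinearMap.adjoint A)) v →
      ‖w‖ ≤ M / Real.sqrt α * ‖v‖) :=
  stmt10_general M α hα A hAM hAα B hB hBB
end

section
/- Let X be a finite-dimensional real vector space, L and V real Hilbert spaces, P : X → L and G : X → V linear maps, and let C_P > 0 and Ĉ ≥ 0 be constants such that ‖P v‖_L ≤ Ĉ ‖G v‖_V for all v ∈ X. Let u ∈ L and ĝ ∈ V satisfy ‖u‖_L ≤ C_P ‖ĝ‖_V, and suppose w ∈ X satisfies ⟨P w, P v⟩_L + ⟨G w, G v⟩_V = ⟨u, P v⟩_L + ⟨ĝ, G v⟩_V for all v ∈ X. Then ‖G w‖_V ≤ (C_P Ĉ + 1) ‖ĝ‖_V. -/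
open scoped RealInnerProductSpace

/-!
Testing the variational equation with `v = w` gives `‖Pw‖² + ‖Gw‖² = ⟪u, Pw⟫ + ⟪g, Gw⟫`.
By Cauchy–Schwarz, the Poincaré bound on `u` and `‖Pw‖ ≤ Ĉ‖Gw‖`, the right-hand side is at most
`(C_P Ĉ + 1)‖g‖‖Gw‖`; dropping `‖Pw‖²` on the left and cancelling one factor `‖Gw‖` gives the claim.
-/

theorem le_of_sq_le_mul_self {R : Type*} [Ring R] [LinearOrder R] [IsStrictOrderedRing R]
    {a c : R} (hc : 0 ≤ c) (h : a ^ 2 ≤ c * a) : a ≤ c := by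
  by_contra! hca
  have ha : 0 < a := hc.trans_lt hca
  exact (mul_lt_mul_of_pos_right hca ha).not_ge (by rwa [← sq])

theorem real_inner_le_mul_of_norm_le {E : Type*} [NormedAddCommGroup E] [InnerProductSpace ℝ E]
    {x y : E} {a b : ℝ} (hx : ‖x‖ ≤ a) (hy : ‖y‖ ≤ b) : ⟪x, y⟫ ≤ a * b :=
  (real_inner_le_norm x y).trans (mul_le_mul hx hy (norm_nonneg y) ((norm_nonneg x).trans hx))

theorem stmt11_general {X : Type*} [AddCommGroup X] [Module ℝ X]
    {L V : Type*} [NormedAddCommGroup L] [InnerProductSpace ℝ L]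
    [NormedAddCommGroup V] [InnerProductSpace ℝ V]
    (P : X →ₗ[ℝ] L) (G : X →ₗ[ℝ] V)
    (CP Chat : ℝ) (hChat : 0 ≤ Chat)
    (hPC : ∀ v : X, ‖P v‖ ≤ Chat * ‖G v‖)
    (u : L) (g : V) (hug : ‖u‖ ≤ CP * ‖g‖)
    (w : X) (hw : ∀ v : X, ⟪P w, P v⟫ + ⟪G w, G v⟫ = ⟪u, P v⟫ + ⟪g, G v⟫) :
    ‖G w‖ ≤ (CP * Chat + 1) * ‖g‖ := by
  have hCPg : 0 ≤ CP * ‖g‖ := (norm_nonneg u).trans hug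
  have henergy : ‖P w‖ ^ 2 + ‖G w‖ ^ 2 = ⟪u, P w⟫ + ⟪g, G w⟫ := by
    simpa only [real_inner_self_eq_norm_sq] using hw w
  have hrhs : 0 ≤ (CP * Chat + 1) * ‖g‖ := by
    rw [add_mul, one_mul, mul_right_comm]
    exact add_nonneg (mul_nonneg hCPg hChat) (norm_nonneg g)
  apply le_of_sq_le_mul_self hrhs
  calc ‖G w‖ ^ 2 ≤ ‖P w‖ ^ 2 + ‖G w‖ ^ 2 := le_add_of_nonneg_left (sq_nonneg _)
    _ = ⟪u, P w⟫ + ⟪g, G w⟫ := henergy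
    _ ≤ CP * ‖g‖ * (Chat * ‖G w‖) + ‖g‖ * ‖G w‖ :=
        add_le_add (real_inner_le_mul_of_norm_le hug (hPC w)) (real_inner_le_norm g (G w))
    _ = (CP * Chat + 1) * ‖g‖ * ‖G w‖ := by ring

/-- The projection inequality (5.6): if `w ∈ X` is the interpolate of `(u, g)`,
i.e. `⟨Pw, Pv⟩ + ⟨Gw, Gv⟩ = ⟨u, Pv⟩ + ⟨g, Gv⟩` for all `v`, with `‖Pv‖ ≤ Ĉ‖Gv‖`
and `‖u‖ ≤ C_P‖g‖`, then `‖Gw‖ ≤ (C_P Ĉ + 1)‖g‖`. -/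
theorem stmt11 {X : Type*} [AddCommGroup X] [Module ℝ X] [FiniteDimensional ℝ X]
    {L V : Type*} [NormedAddCommGroup L] [InnerProductSpace ℝ L] [CompleteSpace L]
    [NormedAddCommGroup V] [InnerProductSpace ℝ V] [CompleteSpace V]
    (P : X →ₗ[ℝ] L) (G : X →ₗ[ℝ] V)
    (CP Chat : ℝ) (hCP : 0 < CP) (hChat : 0 ≤ Chat)
    (hPC : ∀ v : X, ‖P v‖ ≤ Chat * ‖G v‖)
    (u : L) (g : V) (hug : ‖u‖ ≤ CP * ‖g‖)
    (w : X) (hw : ∀ v : X, ⟪P w, P v⟫ + ⟪G w, G v⟫ = ⟪u, P v⟫ + ⟪g, G v⟫) :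
    ‖G w‖ ≤ (CP * Chat + 1) * ‖g‖ :=
  stmt11_general P G CP Chat hChat hPC u g hug w hw
end

section
/- Let X be a finite-dimensional real vector space, L and V real Hilbert spaces, P : X → L and G : X → V linear maps, and S : V → V a continuous self-adjoint linear operator with ⟨S ξ, ξ⟩ ≥ 0 for all ξ ∈ V. Let Ĉ ≥ 0 satisfy ‖P z‖²_L ≤ Ĉ² ⟨S G z, G z⟩ for all z ∈ X. Let u ∈ L and w ∈ X, and suppose v₁, r ∈ X satisfy ⟨S G v₁, G z⟩_V = ⟨u, P z⟩_L and ⟨S G r, G z⟩_V = ⟨P w, P z⟩_L for all z ∈ X. Then ⟨S G(v₁ − r), G(v₁ − r)⟩ ≤ Ĉ² ‖u − P w‖²_L. -/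
/-!
With `e = v₁ - r`, the defining equations give `t := ⟨S G e, G e⟩ = ⟨u - P w, P e⟩`, so
`t ≤ ‖u - P w‖ ‖P e‖` by Cauchy–Schwarz, while `‖P e‖² ≤ Ĉ² t`. Squaring the first bound and
inserting the second gives `t² ≤ Ĉ² ‖u - P w‖² t`, and dividing by `t` (when `t > 0`) concludes.
-/

open scoped RealInnerProductSpace

theorem le_mul_sq_of_le_mul_of_sq_le_mul {t a b c : ℝ} (hc : 0 ≤ c) (hab : t ≤ a * b)
    (hb : b ^ 2 ≤ c * t) : t ≤ c * a ^ 2 := by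
  rcases le_or_gt t 0 with ht | ht
  · exact ht.trans (by positivity)
  · have hsq : t ^ 2 ≤ (a * b) ^ 2 := pow_le_pow_left₀ ht.le hab 2
    nlinarith [mul_le_mul_of_nonneg_left hb (sq_nonneg a)]

section RieszRepresentative

variable {X L V : Type*} [AddCommGroup X] [Module ℝ X]
  [NormedAddCommGroup L] [InnerProductSpace ℝ L] [NormedAddCommGroup V] [InnerProductSpace ℝ V]
  (P : X →ₗ[ℝ] L) (G : X →ₗ[ℝ] V) (S : V →L[ℝ] V)

def IsRieszRep (f : L) (v : X) : Prop :=
  ∀ z : X, ⟪S (G v), G z⟫ = ⟪f, P z⟫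

variable {P G S}

theorem IsRieszRep.sub {f g : L} {v r : X} (hv : IsRieszRep P G S f v)
    (hr : IsRieszRep P G S g r) : IsRieszRep P G S (f - g) (v - r) := by
  intro z
  rw [map_sub, map_sub, inner_sub_left, inner_sub_left, hv z, hr z]

theorem IsRieszRep.energy_le {f : L} {v : X} {C : ℝ} (hv : IsRieszRep P G S f v)
    (hP : ∀ z : X, ‖P z‖ ^ 2 ≤ C ^ 2 * ⟪S (G z), G z⟫) :
    ⟪S (G v), G v⟫ ≤ C ^ 2 * ‖f‖ ^ 2 :=
  le_mul_sq_of_le_mul_of_sq_le_mul (sq_nonneg C)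
    ((hv v).trans_le (real_inner_le_norm f (P v))) (hP v)

end RieszRepresentative

theorem stmt12_general {X : Type*} [AddCommGroup X] [Module ℝ X]
    {L V : Type*} [NormedAddCommGroup L] [InnerProductSpace ℝ L]
    [NormedAddCommGroup V] [InnerProductSpace ℝ V]
    (P : X →ₗ[ℝ] L) (G : X →ₗ[ℝ] V) (S : V →L[ℝ] V)
    (Chat : ℝ)
    (hP : ∀ z : X, ‖P z‖ ^ 2 ≤ Chat ^ 2 * ⟪S (G z), G z⟫)
    (u : L) (w : X) (v₁ r : X)
    (hv₁ : ∀ z : X, ⟪S (G v₁), G z⟫ = ⟪u, P z⟫)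
    (hr : ∀ z : X, ⟪S (G r), G z⟫ = ⟪P w, P z⟫) :
    ⟪S (G (v₁ - r)), G (v₁ - r)⟫ ≤ Chat ^ 2 * ‖u - P w‖ ^ 2 :=
  IsRieszRep.energy_le (IsRieszRep.sub hv₁ hr) hP

/-- The comparison estimate from the proof of Lemma 5.4: if `v₁` and `r` are the
discrete Riesz representatives of `u ∈ L` and of `P w`, then
`⟨S G(v₁ − r), G(v₁ − r)⟩ ≤ Ĉ² ‖u − P w‖²`. -/
theorem stmt12 {X : Type*} [AddCommGroup X] [Module ℝ X] [FiniteDimensional ℝ X]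
    {L V : Type*} [NormedAddCommGroup L] [InnerProductSpace ℝ L] [CompleteSpace L]
    [NormedAddCommGroup V] [InnerProductSpace ℝ V] [CompleteSpace V]
    (P : X →ₗ[ℝ] L) (G : X →ₗ[ℝ] V) (S : V →L[ℝ] V) (hS : IsSelfAdjoint S)
    (hSpos : ∀ ξ : V, 0 ≤ ⟪S ξ, ξ⟫)
    (Chat : ℝ) (hChat : 0 ≤ Chat)
    (hP : ∀ z : X, ‖P z‖ ^ 2 ≤ Chat ^ 2 * ⟪S (G z), G z⟫)
    (u : L) (w : X) (v₁ r : X)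
    (hv₁ : ∀ z : X, ⟪S (G v₁), G z⟫ = ⟪u, P z⟫)
    (hr : ∀ z : X, ⟪S (G r), G z⟫ = ⟪P w, P z⟫) :
    ⟪S (G (v₁ - r)), G (v₁ - r)⟫ ≤ Chat ^ 2 * ‖u - P w‖ ^ 2 :=
  stmt12_general P G S Chat hP u w v₁ r hv₁ hr
end
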